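/- arXiv:1912.06930 — 8 statements merged into one kernel-verified Lean document; each statement's English description precedes it below -/
import Mathlib

section
/- For all positive integers n, k, and nonnegative integer j, the coefficient identity holds: binom(n(k+1)-1+j, n) - k*binom(n(k+1)-1+j, n-1) = (j/((k+1)n+j)) * binom((k+1)n+j, n). -/
/-- Lagrange-inversion coefficient identity for `[x^n] y^j` where `y = 1 + x y^(k+1)`. -/
theorem stmt_0 (n k : ℕ) (hn : 0 < n) (hk : 0 < k) (j : ℕ) :
    ((n * (k + 1) - 1 + j).choose n : ℚ) - (k : ℚ) * ((n * (k + 1) - 1 + j).choose (n - 1)) =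
      ((j : ℚ) / ((k + 1) * n + j)) * (((k + 1) * n + j).choose n) := by
  obtain ⟨m, rfl⟩ := Nat.exists_eq_succ_of_ne_zero hn.ne'
  have hpos : 1 ≤ (m + 1) * (k + 1) := Nat.one_le_iff_ne_zero.mpr (by positivity)
  set M := (m + 1) * (k + 1) - 1 + j with hMdef
  have h1 : M + 1 = (k + 1) * (m + 1) + j := by
    have : (m + 1) * (k + 1) = (k + 1) * (m + 1) := mul_comm _ _
    omega
  have hc : (M + 1).choose (m + 1) = M.choose m + M.choose (m + 1) :=
    Nat.choose_succ_succ' M m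
  have hmul : (M + 1) * M.choose m = (M + 1).choose (m + 1) * (m + 1) :=
    Nat.add_one_mul_choose_eq M m
  simp only [Nat.add_sub_cancel, Nat.succ_sub_one]
  rw [← h1]
  have hM1 : ((k : ℚ) + 1) * (m + 1) + j = (M : ℚ) + 1 := by
    have := congrArg (Nat.cast (R := ℚ)) h1
    push_cast at this
    linarith
  push_cast
  rw [hM1]
  have hden : (M : ℚ) + 1 ≠ 0 := by positivity
  have hcQ : (((M + 1).choose (m + 1) : ℕ) : ℚ) = M.choose m + M.choose (m + 1) := by
    exact_mod_cast congrArg (Nat.cast (R := ℚ)) hc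
  have hmulQ : ((M : ℚ) + 1) * M.choose m = ((M + 1).choose (m + 1) : ℕ) * ((m : ℚ) + 1) := by
    exact_mod_cast congrArg (Nat.cast (R := ℚ)) hmul
  have hMQ : ((M : ℚ) + 1) = ((k : ℚ) + 1) * ((m : ℚ) + 1) + j := hM1.symm
  rw [div_mul_eq_mul_div, eq_div_iff hden] at *
  linear_combination (-((M : ℚ) + 1)) * hcQ + (-((k : ℚ) + 1)) * hmulQ +
    (((M + 1).choose (m + 1) : ℚ)) * hMQ
end

section
/- Let y = y(x) be the formal power series satisfying y = 1 + x*y^(k+1), for a fixed positive integer k. Then for every nonnegative integer j and n ≥ 0, the coefficient of x^n in y^j equals (j/((k+1)n+j))*binom((k+1)n+j, n) (interpreting the value as 1 when n = 0 and j = 0). -/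
open PowerSeries

/-! Multiplying `y ^ j` by `y = 1 + X y ^ (k + 1)` gives `y ^ (j + 1) = y ^ j + X y ^ (k + 1 + j)`,
so the coefficients `[X^n] y ^ j` satisfy a recurrence in `(n, j)` which, together with
`[X^0] y ^ j = 1` and `[X^(n+1)] y ^ 0 = 0`, determines them. The Fuss–Catalan numbers
`j / ((k + 1) n + j) * C((k + 1) n + j, n)` satisfy the same recurrence, by Pascal's rule and
`(m + 1) C(m, n) = (n + 1) C(m + 1, n + 1)`. -/

section Recurrence

variable {R : Type*} [CommSemiring R] {y : R⟦X⟧} {a : ℕ}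

theorem pow_succ_eq_of_eq_one_add_X_mul (hy : y = 1 + X * y ^ a) (j : ℕ) :
    y ^ (j + 1) = y ^ j + X * y ^ (a + j) := by
  calc y ^ (j + 1) = y ^ j * (1 + X * y ^ a) := by rw [← hy, pow_succ]
    _ = y ^ j + X * y ^ (a + j) := by ring

theorem constantCoeff_eq_one_of_eq_one_add_X_mul (hy : y = 1 + X * y ^ a) :
    constantCoeff y = 1 := by
  rw [hy]
  simp

theorem coeff_pow_eq_of_recurrence (hy : y = 1 + X * y ^ a) (c : ℕ → ℕ → R)
    (h_zero : ∀ j, c j 0 = 1) (h_zero_succ : ∀ n, c 0 (n + 1) = 0)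
    (h_succ_succ : ∀ j n, c (j + 1) (n + 1) = c j (n + 1) + c (a + j) n) (j n : ℕ) :
    coeff n (y ^ j) = c j n := by
  induction n generalizing j with
  | zero =>
    rw [coeff_zero_eq_constantCoeff_apply, map_pow,
      constantCoeff_eq_one_of_eq_one_add_X_mul hy, one_pow, h_zero]
  | succ n ih =>
    induction j with
    | zero => rw [pow_zero, coeff_one, if_neg n.succ_ne_zero, h_zero_succ]
    | succ j ihj =>
      rw [pow_succ_eq_of_eq_one_add_X_mul hy, map_add, coeff_succ_X_mul, ihj, ih, h_succ_succ]

end Recurrence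

section FussCatalan

variable {K : Type*} [Field K]

/-- The value at `n = j = 0` is set to `1` by hand; the formula would give `0 / 0 = 0`. -/
def fussCatalan (k j n : ℕ) : K :=
  if n = 0 ∧ j = 0 then 1
  else ((j : K) / ((k + 1) * n + j)) * (((k + 1) * n + j).choose n)

theorem fussCatalan_eq_of_add_eq {k j n m : ℕ} (hm : (k + 1) * n + j = m) (hm0 : m ≠ 0) :
    (fussCatalan k j n : K) = j / m * m.choose n := by
  have hjn : ¬(n = 0 ∧ j = 0) := by rintro ⟨rfl, rfl⟩; simp_all
  rw [fussCatalan, if_neg hjn, ← hm]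
  push_cast
  rfl

variable [CharZero K]

theorem fussCatalan_zero_right (k j : ℕ) : (fussCatalan k j 0 : K) = 1 := by
  rcases Nat.eq_zero_or_pos j with rfl | hj
  · simp [fussCatalan]
  · rw [fussCatalan_eq_of_add_eq (m := j) (by ring) hj.ne', Nat.choose_zero_right, Nat.cast_one,
      mul_one, div_self (Nat.cast_ne_zero.mpr hj.ne')]

theorem fussCatalan_zero_succ (k n : ℕ) : (fussCatalan k 0 (n + 1) : K) = 0 := by
  simp [fussCatalan]

theorem fussCatalan_succ_succ (k j n : ℕ) :
    (fussCatalan k (j + 1) (n + 1) : K) = fussCatalan k j (n + 1) + fussCatalan k (k + 1 + j) n := by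
  set M := (k + 1) * (n + 1) + j with hM
  have hM0 : M ≠ 0 := by positivity
  rw [fussCatalan_eq_of_add_eq (m := M + 1) (by ring) M.succ_ne_zero,
    fussCatalan_eq_of_add_eq (m := M) rfl hM0, fussCatalan_eq_of_add_eq (m := M) (by ring) hM0]
  have h_pascal : ((M + 1).choose (n + 1) : K) = M.choose n + M.choose (n + 1) := by
    exact_mod_cast Nat.choose_succ_succ' M n
  have h_absorb : ((M : K) + 1) * M.choose n = (M + 1).choose (n + 1) * (n + 1) := by
    exact_mod_cast Nat.add_one_mul_choose_eq M n
  have hMK : (M : K) = (k + 1) * (n + 1) + j := by rw [hM]; push_cast; ring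
  rw [h_pascal] at h_absorb ⊢
  push_cast
  field_simp
  rw [hMK] at h_absorb ⊢
  linear_combination (-(k : K) - 1) * h_absorb

end FussCatalan

theorem stmt_2_general (k : ℕ) (y : PowerSeries ℚ)
    (hy : y = 1 + X * y ^ (k + 1)) :
    ∀ j n : ℕ,
      coeff n (y ^ j) =
        if n = 0 ∧ j = 0 then 1
        else ((j : ℚ) / ((k + 1) * n + j)) * (((k + 1) * n + j).choose n) :=
  coeff_pow_eq_of_recurrence hy (fussCatalan k) (fussCatalan_zero_right k)
    (fussCatalan_zero_succ k) (fussCatalan_succ_succ k)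

/-- If `y` is the formal power series with constant term 1 satisfying `y = 1 + x y^(k+1)`,
then `[x^n] y^j = (j/((k+1)n+j)) * binom((k+1)n+j, n)`, interpreted as 1 when `n = j = 0`. -/
theorem stmt_2 (k : ℕ) (hk : 0 < k) (y : PowerSeries ℚ)
    (hy : y = 1 + X * y ^ (k + 1)) :
    ∀ j n : ℕ,
      coeff n (y ^ j) =
        if n = 0 ∧ j = 0 then 1
        else ((j : ℚ) / ((k + 1) * n + j)) * (((k + 1) * n + j).choose n) :=
  stmt_2_general k y hy
end

section
/- Fix a positive integer k. Define the sequence of polynomials D_m(z) by D_0 = D_1 = ... = D_k = 1 and D_m = D_{m-1} - z^(k+1)*D_{m-k-1} for m > k. Then D_m(z) = sum over integers ℓ with 0 ≤ ℓ ≤ m/k of binom(m - kℓ, ℓ) * (-1)^ℓ * z^((k+1)ℓ). -/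
open Polynomial Finset

/-- The general term of the closed-form sum. -/
noncomputable def trmD (k n ℓ : ℕ) : ℚ[X] :=
  ((n - k * ℓ).choose ℓ : ℚ[X]) * (-1) ^ ℓ * X ^ ((k + 1) * ℓ)

lemma pascal_auxD (k m ℓ : ℕ) (hk : 0 < k) (hm : k < m) :
    (m - k * (ℓ + 1)).choose (ℓ + 1)
      = (m - 1 - k * (ℓ + 1)).choose (ℓ + 1) + (m - 1 - k * (ℓ + 1)).choose ℓ := by
  have hmul : k * (ℓ + 1) = k * ℓ + k := by ring
  rcases lt_or_ge (k * (ℓ + 1)) m with h | h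
  · have h1 : m - k * (ℓ + 1) = (m - 1 - k * (ℓ + 1)) + 1 := by omega
    rw [h1, Nat.choose_succ_succ]
    ring
  · have hℓ : 1 ≤ ℓ := by
      rcases Nat.eq_zero_or_pos ℓ with rfl | h'
      · simp at h; omega
      · exact h'
    have h1 : m - k * (ℓ + 1) = 0 := by omega
    have h2 : m - 1 - k * (ℓ + 1) = 0 := by omega
    rw [h1, h2, Nat.choose_eq_zero_of_lt (by omega), Nat.choose_eq_zero_of_lt (by omega)]

lemma pointD (k m ℓ : ℕ) (hk : 0 < k) (hm : k < m) :
    trmD k m (ℓ + 1) - trmD k (m - 1) (ℓ + 1) = -(X ^ (k + 1) * trmD k (m - k - 1) ℓ) := by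
  have hmul : k * (ℓ + 1) = k * ℓ + k := by ring
  have hnat : m - k - 1 - k * ℓ = m - 1 - k * (ℓ + 1) := by omega
  have hp := pascal_auxD k m ℓ hk hm
  simp only [trmD, hnat, hp]
  push_cast
  ring

lemma sum_recD (k m : ℕ) (hk : 0 < k) (hm : k < m) :
    ∑ ℓ ∈ range (m + 1), trmD k m ℓ
      = ∑ ℓ ∈ range (m - 1 + 1), trmD k (m - 1) ℓ
        - X ^ (k + 1) * ∑ ℓ ∈ range (m - k - 1 + 1), trmD k (m - k - 1) ℓ := by
  have hm1 : m - 1 + 1 = m := by omega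
  -- extend second sum to range (m+1)
  have e1 : ∑ ℓ ∈ range (m - 1 + 1), trmD k (m - 1) ℓ
      = ∑ ℓ ∈ range (m + 1), trmD k (m - 1) ℓ := by
    rw [hm1, Finset.sum_range_succ]
    have : trmD k (m - 1) m = 0 := by
      have h1 : m - 1 - k * m = 0 := by
        have : m ≤ k * m := Nat.le_mul_of_pos_left m hk
        omega
      simp [trmD, h1, Nat.choose_eq_zero_of_lt (show 0 < m by omega)]
    rw [this, add_zero]
  have e2 : ∑ ℓ ∈ range (m - k - 1 + 1), trmD k (m - k - 1) ℓ
      = ∑ ℓ ∈ range (m + 1), trmD k (m - k - 1) ℓ := by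
    apply Finset.sum_subset
    · exact Finset.range_subset_range.2 (by omega)
    · intro ℓ _ hln
      have hℓ : m - k ≤ ℓ := by
        simp only [Finset.mem_range] at hln
        omega
      have h1 : m - k - 1 - k * ℓ = 0 := by
        have : ℓ ≤ k * ℓ := Nat.le_mul_of_pos_left ℓ hk
        omega
      have hℓ1 : 0 < ℓ := by omega
      simp [trmD, h1, Nat.choose_eq_zero_of_lt hℓ1]
  rw [e1, e2]
  have key : ∑ ℓ ∈ range (m + 1), trmD k m ℓ - ∑ ℓ ∈ range (m + 1), trmD k (m - 1) ℓ
      = -(X ^ (k + 1) * ∑ ℓ ∈ range (m + 1), trmD k (m - k - 1) ℓ) := by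
    rw [← Finset.sum_sub_distrib, Finset.sum_range_succ']
    have h0 : trmD k m 0 - trmD k (m - 1) 0 = 0 := by
      simp [trmD]
    -- last term of the shifted RHS sum vanishes
    have hlast : trmD k (m - k - 1) m = 0 := by
      have h1 : m - k - 1 - k * m = 0 := by
        have : m ≤ k * m := Nat.le_mul_of_pos_left m hk
        omega
      simp [trmD, h1, Nat.choose_eq_zero_of_lt (show 0 < m by omega)]
    rw [Finset.sum_range_succ, hlast, add_zero, Finset.mul_sum, ← Finset.sum_neg_distrib]
    rw [h0, add_zero]
    exact Finset.sum_congr rfl fun ℓ _ => pointD k m ℓ hk hm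
  linear_combination key
  
/-- Closed form for the determinant polynomials `D_m` with
`D_0 = ⋯ = D_k = 1` and `D_m = D_{m-1} - z^(k+1) D_{m-k-1}` for `m > k`. -/
theorem stmt_3 (k : ℕ) (hk : 0 < k) (D : ℕ → Polynomial ℚ)
    (hinit : ∀ m, m ≤ k → D m = 1)
    (hrec : ∀ m, k < m → D m = D (m - 1) - X ^ (k + 1) * D (m - k - 1)) :
    ∀ m, D m = ∑ ℓ ∈ Finset.range (m / k + 1),
      ((m - k * ℓ).choose ℓ : ℚ[X]) * (-1) ^ ℓ * X ^ ((k + 1) * ℓ) := by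
  have key : ∀ m, D m = ∑ ℓ ∈ Finset.range (m + 1), trmD k m ℓ := by
    intro m
    induction m using Nat.strong_induction_on with
    | _ m ih =>
      rcases le_or_gt m k with hmk | hmk
      · rw [hinit m hmk, Finset.sum_range_succ']
        have hz : ∀ ℓ ∈ range m, trmD k m (ℓ + 1) = 0 := by
          intro ℓ _
          have h1 : m - k * (ℓ + 1) = 0 := by
            have : k ≤ k * (ℓ + 1) := Nat.le_mul_of_pos_right k (by omega)
            omega
          simp [trmD, h1, Nat.choose_eq_zero_of_lt (show 0 < ℓ + 1 by omega)]
        rw [Finset.sum_congr rfl hz]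
        simp [trmD]
      · rw [hrec m hmk, ih (m - 1) (by omega), ih (m - k - 1) (by omega)]
        have := sum_recD k m hk hmk
        simp only [trmD] at this ⊢
        exact this.symm
  intro m
  rw [key m]
  symm
  apply Finset.sum_subset
  · exact Finset.range_subset_range.2 (Nat.succ_le_succ (Nat.div_le_self m k))
  · intro ℓ hl hln
    have h1 : m / k < ℓ := by
      simp only [Finset.mem_range] at hln
      omega
    have h2 : m < ℓ * k := (Nat.div_lt_iff_lt_mul hk).mp h1
    rw [Nat.mul_comm] at h2
    have h3 : m - k * ℓ = 0 := by omega
    have h4 : Nat.choose 0 ℓ = 0 := Nat.choose_eq_zero_of_lt (lt_of_le_of_lt (Nat.zero_le _) h1)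
    simp [trmD, h3, h4]
end

section
/- For 0 ≤ t ≤ k, the number of lattice paths of length (k+1)n with up-steps +1 and down-steps -k, starting and ending at height 0 and never going below -t, equals ((t+1)/((k+1)n+t+1)) * binom((k+1)n+t+1, n). -/
open Finset

/-- The number of `k_t`-Dyck paths of length `L`: paths with steps `+1` (up) and `-k`
(down), starting and ending at level 0, never going below `-t`. -/
def ktDyckCount (k t L : ℕ) : ℕ :=
  (Finset.univ.filter (fun f : Fin L → Bool =>
    (∀ i : Fin L, -(t : ℤ) ≤ ∑ j ∈ Finset.univ.filter (· ≤ i),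
        (if f j then (1 : ℤ) else -(k : ℤ))) ∧
    (∑ j, (if f j then (1 : ℤ) else -(k : ℤ))) = 0)).card


namespace KtDyck

set_option linter.unusedSectionVars false
set_option linter.unusedVariables false

/-- partial sum of the first `m` steps -/
def psum (w : ℕ → ℤ) (m : ℕ) : ℤ := ∑ j ∈ Finset.range m, w j

theorem psum_succ (w : ℕ → ℤ) (m : ℕ) : psum w (m + 1) = psum w m + w m :=
  Finset.sum_range_succ _ _

theorem psum_add (w : ℕ → ℤ) (a b : ℕ) :
    psum w (a + b) = psum w a + ∑ j ∈ Finset.range b, w (a + j) := by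
  induction b with
  | zero => simp [psum]
  | succ b ih =>
    rw [← Nat.add_assoc, psum_succ, ih, Finset.sum_range_succ, add_assoc]

section Cycle

variable {w : ℕ → ℤ} {N s : ℕ}

/-- `i` is a "good" index: all partial sums over windows starting at `i`
(of length up to `N`) are positive. -/
def Good (w : ℕ → ℤ) (N : ℕ) (i : ℕ) : Prop :=
  ∀ j ∈ Finset.Icc (i + 1) (i + N), psum w i < psum w j

instance (w : ℕ → ℤ) (N : ℕ) : DecidablePred (Good w N) := fun _ =>
  Finset.decidableDforallFinset

variable (hN : 0 < N) (hs : 0 < s)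
  (hper : ∀ j, w (j + N) = w j)
  (hle : ∀ j, w j ≤ 1)
  (hsum : psum w N = s)

section
include hper hsum

theorem window_sum (m : ℕ) : ∑ j ∈ Finset.range N, w (m + j) = s := by
  induction m with
  | zero => simpa [psum] using hsum
  | succ m ih =>
    have h1 : ∑ j ∈ Finset.range N, w (m + 1 + j)
        = ∑ j ∈ Finset.range N, w (m + (j + 1)) := by
      apply Finset.sum_congr rfl; intro j _; ring_nf
    have h2 : ∑ j ∈ Finset.range (N + 1), w (m + j)
        = (∑ j ∈ Finset.range N, w (m + (j + 1))) + w (m + 0) :=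
      Finset.sum_range_succ' _ _
    have h3 : ∑ j ∈ Finset.range (N + 1), w (m + j)
        = (∑ j ∈ Finset.range N, w (m + j)) + w (m + N) :=
      Finset.sum_range_succ _ _
    have h4 : w (m + N) = w m := hper m
    simp only [Nat.add_zero] at h2
    rw [h1]
    omega

theorem psum_add_N (m : ℕ) : psum w (m + N) = psum w m + s := by
  rw [psum_add, window_sum hper hsum]

theorem psum_add_mul (m q : ℕ) : psum w (m + q * N) = psum w m + (q : ℤ) * (s : ℤ) := by
  induction q with
  | zero => simp
  | succ q ih =>
    have he : m + (q + 1) * N = (m + q * N) + N := by ring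
    rw [he, psum_add_N hper hsum, ih]
    push_cast; ring

end

/-- the minimum of the partial sums over one period -/
noncomputable def mmin (w : ℕ → ℤ) (N : ℕ) : ℤ :=
  sInf (Set.range fun r : Fin N => psum w r)

section
include hN

theorem mmin_le (r : ℕ) (hr : r < N) : mmin w N ≤ psum w r := by
  have hbdd : BddBelow (Set.range fun r : Fin N => psum w r) :=
    (Set.finite_range _).bddBelow
  exact csInf_le hbdd ⟨⟨r, hr⟩, rfl⟩

theorem exists_mmin : ∃ j0 < N, psum w j0 = mmin w N := by
  have hne : (Set.range fun r : Fin N => psum w r).Nonempty :=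
    ⟨psum w (⟨0, hN⟩ : Fin N), ⟨⟨0, hN⟩, rfl⟩⟩
  obtain ⟨⟨j0, hj0⟩, hj⟩ := hne.csInf_mem (Set.finite_range _)
  exact ⟨j0, hj0, hj⟩

include hper hsum hs

theorem psum_ge_mmin (j : ℕ) : mmin w N ≤ psum w j := by
  have h1 := psum_add_mul hper hsum (j % N) (j / N)
  rw [Nat.mod_add_div' j N] at h1
  have h2 := mmin_le (w := w) hN (j % N) (Nat.mod_lt _ hN)
  have h3 : (0:ℤ) ≤ ((j / N : ℕ) : ℤ) * (s : ℤ) := by positivity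
  omega

theorem psum_ge_of_ge_N (j : ℕ) (hj : N ≤ j) : mmin w N + s ≤ psum w j := by
  have h : psum w (j - N + N) = psum w (j - N) + s := psum_add_N hper hsum _
  have he : j - N + N = j := by omega
  rw [he] at h
  have := psum_ge_mmin hN hs hper hsum (j - N)
  omega

/-- partial sums reach every value `c` above any point where `psum ≤ c`. -/
theorem reach (hlew : ∀ j, w j ≤ 1) (j : ℕ) (c : ℤ) (hjc : psum w j ≤ c) :
    ∃ j', j ≤ j' ∧ psum w j' = c := by
  have hex : ∃ q, c ≤ psum w (j + q) := by
    refine ⟨(c - psum w j).toNat * N, ?_⟩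
    have h := psum_add_mul hper hsum j ((c - psum w j).toNat)
    have h2 : (c - psum w j) ≤ ((c - psum w j).toNat : ℤ) := Int.self_le_toNat _
    have h3 : ((c - psum w j).toNat : ℤ) * 1 ≤ ((c - psum w j).toNat : ℤ) * (s:ℤ) := by
      apply mul_le_mul_of_nonneg_left _ (by positivity)
      exact_mod_cast hs
    omega
  classical
  let q0 := Nat.find hex
  have hq0 : c ≤ psum w (j + q0) := Nat.find_spec hex
  rcases Nat.eq_zero_or_pos q0 with h0 | h0
  · refine ⟨j, le_refl _, ?_⟩
    rw [h0] at hq0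
    simp only [Nat.add_zero] at hq0
    omega
  · have hq1 : ¬ c ≤ psum w (j + (q0 - 1)) := Nat.find_min hex (by omega)
    refine ⟨j + q0, by omega, ?_⟩
    have hstep : psum w (j + (q0 - 1) + 1) = psum w (j + (q0 - 1)) + w (j + (q0 - 1)) :=
      psum_succ _ _
    have he : j + (q0 - 1) + 1 = j + q0 := by omega
    rw [he] at hstep
    have := hlew (j + (q0 - 1))
    omega

end

/-- `a` is the last index with partial sum `≤ c`. -/
def LastLe (w : ℕ → ℤ) (c : ℤ) (a : ℕ) : Prop :=
  psum w a ≤ c ∧ ∀ j, a < j → c < psum w j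

theorem LastLe.unique {c : ℤ} {a b : ℕ} (ha : LastLe w c a) (hb : LastLe w c b) : a = b := by
  rcases lt_trichotomy a b with h | h | h
  · have := ha.2 b h; have := hb.1; omega
  · exact h
  · have := hb.2 a h; have := ha.1; omega

section
include hN hs hper hsum

theorem LastLe.psum_eq (hlew : ∀ j, w j ≤ 1) {c : ℤ} {a : ℕ} (ha : LastLe w c a) :
    psum w a = c := by
  obtain ⟨j', hj1, hj2⟩ := reach hN hs hper hsum hlew a c ha.1
  rcases Nat.eq_or_lt_of_le hj1 with h | h
  · rw [← h] at hj2; exact hj2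
  · have := ha.2 j' h; omega

theorem exists_lastLe (c : ℤ) (hc : mmin w N ≤ c) : ∃ a, LastLe w c a := by
  classical
  obtain ⟨j0, hj0N, hj0⟩ := exists_mmin hN (w := w)
  have hNB : N ≤ N * ((c - mmin w N).toNat + 1) := Nat.le_mul_of_pos_right _ (by omega)
  have hwit : psum w j0 ≤ c := by rw [hj0]; exact hc
  refine ⟨Nat.findGreatest (fun j => psum w j ≤ c) (N * ((c - mmin w N).toNat + 1)), ?_, ?_⟩
  · exact Nat.findGreatest_spec (P := fun j => psum w j ≤ c) (le_trans (le_of_lt hj0N) hNB) hwit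
  · intro j hj
    by_cases hjB : j ≤ N * ((c - mmin w N).toNat + 1)
    · have h := Nat.findGreatest_is_greatest (P := fun j => psum w j ≤ c) hj hjB
      simp only [not_le] at h
      exact h
    · push_neg at hjB
      have h1 := psum_add_mul hper hsum (j % N) (j / N)
      rw [Nat.mod_add_div' j N] at h1
      have h2 := mmin_le (w := w) hN (j % N) (Nat.mod_lt _ hN)
      have h3 : (c - mmin w N).toNat + 1 ≤ j / N :=
        (Nat.le_div_iff_mul_le hN).mpr
          (le_of_lt (lt_of_le_of_lt (le_of_eq (Nat.mul_comm _ _)) hjB))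
      have hd : ((c - mmin w N).toNat + 1 : ℤ) ≤ ((j / N : ℕ) : ℤ) := by exact_mod_cast h3
      have hss : (1:ℤ) ≤ (s:ℤ) := by exact_mod_cast hs
      have htn : c - mmin w N ≤ ((c - mmin w N).toNat : ℤ) := Int.self_le_toNat _
      have h5 : ((c - mmin w N).toNat + 1 : ℤ) * 1 ≤ ((j / N : ℕ) : ℤ) * (s:ℤ) :=
        mul_le_mul hd hss one_pos.le (by positivity)
      omega

end

theorem LastLe.good {c : ℤ} {a : ℕ} (ha : LastLe w c a) : Good w N a := by
  intro j hj
  simp only [Finset.mem_Icc] at hj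
  have := ha.2 j (by omega)
  have := ha.1
  omega

section
include hN hs hper hsum

theorem Good.all (hlew : ∀ j, w j ≤ 1) {i : ℕ} (hi : Good w N i) :
    ∀ j, i < j → psum w i < psum w j := by
  intro j
  induction j using Nat.strong_induction_on with
  | _ j ih =>
    intro hj
    by_cases hjb : j ≤ i + N
    · exact hi j (Finset.mem_Icc.mpr ⟨hj, hjb⟩)
    · push_neg at hjb
      have h1 : psum w (j - N + N) = psum w (j - N) + s := psum_add_N hper hsum _
      have h2 : j - N + N = j := by omega
      rw [h2] at h1
      have h3 := ih (j - N) (by omega) (by omega)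
      omega

theorem Good.lastLe (hlew : ∀ j, w j ≤ 1) {i : ℕ} (hi : Good w N i) :
    LastLe w (psum w i) i :=
  ⟨le_refl _, fun j hj => hi.all hN hs hper hsum hlew j hj⟩

theorem LastLe.add_N {c : ℤ} {a : ℕ} (ha : LastLe w c a) :
    LastLe w (c + s) (a + N) := by
  constructor
  · have h := psum_add_N hper hsum (m := a); have := ha.1; omega
  · intro j hj
    have h1 : psum w (j - N + N) = psum w (j - N) + s := psum_add_N hper hsum _
    have h2 : j - N + N = j := by omega
    rw [h2] at h1
    have := ha.2 (j - N) (by omega)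
    omega

theorem LastLe.lt_N {c : ℤ} {a : ℕ} (ha : LastLe w c a) (hc : c < mmin w N + s) :
    a < N := by
  by_contra h
  push_neg at h
  have := psum_ge_of_ge_N hN hs hper hsum a h
  have := ha.1
  omega

theorem Good.psum_lt {i : ℕ} (hi : Good w N i) (hiN : i < N) :
    psum w i < mmin w N + s := by
  obtain ⟨j0, hj0N, hj0⟩ := exists_mmin hN (w := w)
  by_cases hij : i < j0
  · have h2 := hi j0 (Finset.mem_Icc.mpr ⟨by omega, by omega⟩)
    omega
  · push_neg at hij
    have h1 : psum w (j0 + N) = psum w j0 + s := psum_add_N hper hsum _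
    have h2 := hi (j0 + N) (Finset.mem_Icc.mpr ⟨by omega, by omega⟩)
    omega

/-- **Cycle lemma**: exactly `s` of the `N` cyclic starting points are good. -/
theorem cycle_card (hlew : ∀ j, w j ≤ 1) :
    ((Finset.range N).filter (Good w N)).card = s := by
  classical
  rw [← Finset.card_range s]
  have key : ∀ i ∈ (Finset.range N).filter (Good w N),
      (psum w i - mmin w N).toNat ∈ Finset.range s := by
    intro i hi
    simp only [Finset.mem_filter, Finset.mem_range] at hi ⊢
    have h1 := psum_ge_mmin hN hs hper hsum i
    have h2 := hi.2.psum_lt hN hs hper hsum hi.1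
    omega
  apply Finset.card_bij (fun i _ => (psum w i - mmin w N).toNat) key
  · intro i hi i' hi' he
    simp only [Finset.mem_filter, Finset.mem_range] at hi hi'
    have h1 := psum_ge_mmin hN hs hper hsum i
    have h1' := psum_ge_mmin hN hs hper hsum i'
    have he2 : psum w i = psum w i' := by omega
    exact (hi.2.lastLe hN hs hper hsum hlew).unique (he2 ▸ hi'.2.lastLe hN hs hper hsum hlew)
  · intro r hr
    simp only [Finset.mem_range] at hr
    obtain ⟨a, ha⟩ := exists_lastLe hN hs hper hsum (mmin w N + r) (by omega)
    have hps := ha.psum_eq hN hs hper hsum hlew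
    have haN : a < N := ha.lt_N hN hs hper hsum (by omega)
    refine ⟨a, ?_, ?_⟩
    · simp only [Finset.mem_filter, Finset.mem_range]
      exact ⟨haN, ha.good⟩
    · rw [hps]; omega

end
end Cycle

section Main

/-- a step: `+1` for `true` (up), `-k` for `false` (down) -/
def stp (k : ℕ) (b : Bool) : ℤ := if b then 1 else -(k : ℤ)

theorem stp_cases (k : ℕ) (b : Bool) : stp k b = 1 ∨ stp k b = -(k : ℤ) := by
  cases b <;> simp [stp]

theorem stp_eq_one (k : ℕ) (b : Bool) (h : stp k b = 1) : b = true := by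
  cases b
  · simp only [stp, if_neg Bool.false_ne_true] at h
    omega
  · rfl

variable {k N : ℕ}

/-- the periodic word (of period `N`) associated to a sequence of steps -/
def wrd (k : ℕ) {N : ℕ} (hN : 0 < N) (f : Fin N → Bool) : ℕ → ℤ :=
  fun j => stp k (f ⟨j % N, Nat.mod_lt _ hN⟩)

theorem wrd_per (hN : 0 < N) (f : Fin N → Bool) (j : ℕ) :
    wrd k hN f (j + N) = wrd k hN f j := by
  simp [wrd, Nat.add_mod_right]

theorem wrd_le (hN : 0 < N) (f : Fin N → Bool) (j : ℕ) : wrd k hN f j ≤ 1 := by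
  rcases stp_cases k (f ⟨j % N, Nat.mod_lt _ hN⟩) with h | h <;>
    simp only [wrd, h] <;> omega

theorem wrd_eq (hN : 0 < N) (f : Fin N → Bool) (j : ℕ) (hj : j < N) :
    wrd k hN f j = stp k (f ⟨j, hj⟩) := by
  simp [wrd, Nat.mod_eq_of_lt hj]

theorem sum_univ_eq (hN : 0 < N) (f : Fin N → Bool) :
    ∑ i : Fin N, stp k (f i) = psum (wrd k hN f) N := by
  rw [psum, ← Fin.sum_univ_eq_sum_range]
  apply Finset.sum_congr rfl
  intro i _
  rw [wrd_eq hN f i.val i.isLt]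

theorem prefix_eq (hN : 0 < N) (f : Fin N → Bool) (i : Fin N) :
    ∑ j ∈ Finset.univ.filter (· ≤ i), stp k (f j) = psum (wrd k hN f) (i.val + 1) := by
  rw [Finset.sum_filter]
  have h1 : ∑ j : Fin N, (if j ≤ i then stp k (f j) else 0)
      = ∑ j ∈ Finset.range N, (fun m => if m ≤ i.val then wrd k hN f m else 0) j := by
    rw [← Fin.sum_univ_eq_sum_range]
    apply Finset.sum_congr rfl
    intro j _
    by_cases h : j ≤ i
    · rw [if_pos h, if_pos (by exact_mod_cast Fin.le_def.mp h), wrd_eq hN f j.val j.isLt]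
    · rw [if_neg h, if_neg (fun hc => h (Fin.le_def.mpr hc))]
  rw [h1, ← Finset.sum_filter]
  have h2 : (Finset.range N).filter (· ≤ i.val) = Finset.range (i.val + 1) := by
    ext a
    simp only [Finset.mem_filter, Finset.mem_range, Nat.lt_succ_iff]
    have := i.isLt
    omega
  rw [h2, psum]

/-- sequences with total sum `s` -/
def Sset (k s N : ℕ) : Finset (Fin N → Bool) :=
  Finset.univ.filter (fun f => ∑ j, stp k (f j) = (s : ℤ))

instance AsetDec (k : ℕ) {N : ℕ} (hN : 0 < N) :
    DecidablePred (fun f : Fin N → Bool => ∀ m ∈ Finset.Icc 1 N, 1 ≤ psum (wrd k hN f) m) :=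
  fun _ => Finset.decidableDforallFinset

/-- sequences with total sum `s` all of whose nonempty partial sums are positive -/
def Aset (k s : ℕ) {N : ℕ} (hN : 0 < N) : Finset (Fin N → Bool) :=
  (Sset k s N).filter (fun f => ∀ m ∈ Finset.Icc 1 N, 1 ≤ psum (wrd k hN f) m)

/-- cyclic rotation of a sequence -/
def rot {N : ℕ} (i : Fin N) (f : Fin N → Bool) : Fin N → Bool := fun x => f (x + i)

theorem rot_mem_Sset {s : ℕ} [NeZero N] (i : Fin N) (f : Fin N → Bool) (hf : f ∈ Sset k s N) :
    rot i f ∈ Sset k s N := by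
  simp only [Sset, Finset.mem_filter, Finset.mem_univ, true_and] at hf ⊢
  rw [← hf]
  exact Equiv.sum_comp (Equiv.addRight i) (fun x => stp k (f x))

theorem wrd_rot (hN : 0 < N) (i : Fin N) (f : Fin N → Bool) (j : ℕ) :
    wrd k hN (rot i f) j = wrd k hN f (j + i.val) := by
  simp only [wrd, rot]
  congr 2
  apply Fin.ext
  simp only [Fin.add_def]
  exact Nat.mod_add_mod j N i.val

theorem psum_rot (hN : 0 < N) (i : Fin N) (f : Fin N → Bool) (m : ℕ) :
    psum (wrd k hN (rot i f)) m
      = psum (wrd k hN f) (i.val + m) - psum (wrd k hN f) i.val := by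
  rw [psum_add]
  have h : ∑ j ∈ Finset.range m, wrd k hN (rot i f) j
      = ∑ j ∈ Finset.range m, wrd k hN f (i.val + j) := by
    apply Finset.sum_congr rfl
    intro j _
    rw [wrd_rot hN i f j, Nat.add_comm]
  rw [psum, h]
  ring

theorem rot_mem_Aset_iff {s : ℕ} (hN : 0 < N) (i : Fin N) (f : Fin N → Bool)
    (hf : f ∈ Sset k s N) :
    rot i f ∈ Aset k s hN ↔ Good (wrd k hN f) N i.val := by
  simp only [Aset, Finset.mem_filter]
  constructor
  · rintro ⟨-, h⟩
    intro j hj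
    simp only [Finset.mem_Icc] at hj
    have hm := h (j - i.val) (Finset.mem_Icc.mpr ⟨by omega, by omega⟩)
    rw [psum_rot hN] at hm
    have he : i.val + (j - i.val) = j := by omega
    rw [he] at hm
    omega
  · intro h
    haveI : NeZero N := ⟨by omega⟩
    refine ⟨rot_mem_Sset i f hf, ?_⟩
    intro m hm
    simp only [Finset.mem_Icc] at hm
    rw [psum_rot hN]
    have := h (i.val + m) (Finset.mem_Icc.mpr ⟨by omega, by omega⟩)
    omega

theorem card_filter_fin (N : ℕ) (p : ℕ → Prop) [DecidablePred p] :
    ((Finset.univ : Finset (Fin N)).filter (fun i => p i.val)).card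
      = ((Finset.range N).filter p).card := by
  apply Finset.card_bij (fun i _ => i.val)
  · intro a ha
    simp only [Finset.mem_filter, Finset.mem_range] at ha ⊢
    exact ⟨a.isLt, ha.2⟩
  · intro a _ b _ h
    exact Fin.ext h
  · intro b hb
    simp only [Finset.mem_filter, Finset.mem_range] at hb
    exact ⟨⟨b, hb.1⟩, by simp only [Finset.mem_filter, Finset.mem_univ, true_and]; exact hb.2, rfl⟩

theorem psum_wrd_of_mem_Sset {s : ℕ} (hN : 0 < N) (f : Fin N → Bool)
    (hf : f ∈ Sset k s N) : psum (wrd k hN f) N = (s : ℤ) := by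
  rw [← sum_univ_eq]
  exact (Finset.mem_filter.mp hf).2

/-- cycle lemma consequence: exactly `s` rotations of each `f ∈ Sset` lie in `Aset` -/
theorem rotations_card {s : ℕ} (hs : 0 < s) (hN : 0 < N) (f : Fin N → Bool)
    (hf : f ∈ Sset k s N) :
    ((Finset.univ : Finset (Fin N)).filter (fun i => rot i f ∈ Aset k s hN)).card = s := by
  have h1 : ((Finset.univ : Finset (Fin N)).filter (fun i => rot i f ∈ Aset k s hN))
      = ((Finset.univ : Finset (Fin N)).filter (fun i => Good (wrd k hN f) N i.val)) := by
    apply Finset.filter_congr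
    intro i _
    exact rot_mem_Aset_iff hN i f hf
  rw [h1, card_filter_fin]
  exact cycle_card hN hs (wrd_per hN f) (psum_wrd_of_mem_Sset hN f hf) (wrd_le hN f)

theorem rot_rot_neg [NeZero N] (i : Fin N) (g : Fin N → Bool) :
    rot i (rot (-i) g) = g := by
  funext x
  simp only [rot]
  congr 1
  exact add_neg_cancel_right x i

theorem rot_inj [NeZero N] (i : Fin N) (f g : Fin N → Bool) (h : rot i f = rot i g) :
    f = g := by
  funext y
  have := congrFun h (y - i)
  simpa [rot, sub_add_cancel] using this

/-- double counting: `N * |Aset| = s * |Sset|` -/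
theorem key_count (k s : ℕ) (hs : 0 < s) {N : ℕ} (hN : 0 < N) :
    N * (Aset k s hN).card = s * (Sset k s N).card := by
  classical
  haveI : NeZero N := ⟨by omega⟩
  have fixedi : ∀ i : Fin N,
      ∑ f ∈ Sset k s N, (if rot i f ∈ Aset k s hN then 1 else 0) = (Aset k s hN).card := by
    intro i
    rw [← Finset.card_filter]
    apply Finset.card_bij (fun f _ => rot i f)
    · intro f hf
      exact (Finset.mem_filter.mp hf).2
    · intro f hf g hg h
      exact rot_inj i f g h
    · intro g hg
      have hgS : g ∈ Sset k s N := (Finset.mem_filter.mp hg).1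
      refine ⟨rot (-i) g, ?_, (rot_rot_neg i g)⟩
      rw [Finset.mem_filter]
      refine ⟨rot_mem_Sset (-i) g hgS, ?_⟩
      rw [rot_rot_neg i g]
      exact hg
  have fixedf : ∀ f ∈ Sset k s N,
      ∑ i : Fin N, (if rot i f ∈ Aset k s hN then 1 else 0) = s := by
    intro f hf
    rw [← Finset.card_filter]
    exact rotations_card hs hN f hf
  have swap : ∑ f ∈ Sset k s N, ∑ i : Fin N, (if rot i f ∈ Aset k s hN then 1 else 0)
      = ∑ i : Fin N, ∑ f ∈ Sset k s N, (if rot i f ∈ Aset k s hN then 1 else 0) :=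
    Finset.sum_comm
  calc N * (Aset k s hN).card
      = ∑ i : Fin N, (Aset k s hN).card := by
        rw [Finset.sum_const, Finset.card_univ, Fintype.card_fin, smul_eq_mul]
    _ = ∑ i : Fin N, ∑ f ∈ Sset k s N, (if rot i f ∈ Aset k s hN then 1 else 0) := by
        apply Finset.sum_congr rfl
        intro i _
        rw [fixedi i]
    _ = ∑ f ∈ Sset k s N, ∑ i : Fin N, (if rot i f ∈ Aset k s hN then 1 else 0) := swap.symm
    _ = ∑ f ∈ Sset k s N, s := by
        apply Finset.sum_congr rfl
        intro f hf
        rw [fixedf f hf]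
    _ = s * (Sset k s N).card := by rw [Finset.sum_const, smul_eq_mul, Nat.mul_comm]

end Main
section Card

theorem sum_stp_eq (k : ℕ) {N : ℕ} (f : Fin N → Bool) :
    ∑ j, stp k (f j)
      = (N : ℤ) - ((k : ℤ) + 1) * ((Finset.univ.filter (fun j => f j = false)).card : ℤ) := by
  classical
  have hsplit : ∑ j, stp k (f j)
      = (∑ j ∈ Finset.univ.filter (fun j => f j = true), stp k (f j))
        + ∑ j ∈ Finset.univ.filter (fun j => ¬ f j = true), stp k (f j) :=
    (Finset.sum_filter_add_sum_filter_not _ _ _).symm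
  have h1 : ∑ j ∈ Finset.univ.filter (fun j => f j = true), stp k (f j)
      = ((Finset.univ.filter (fun j => f j = true)).card : ℤ) := by
    rw [Finset.sum_congr rfl (fun j hj => ?_), Finset.sum_const, nsmul_eq_mul, mul_one]
    simp only [Finset.mem_filter] at hj
    simp [stp, hj.2]
  have h2 : ∑ j ∈ Finset.univ.filter (fun j => ¬ f j = true), stp k (f j)
      = ((Finset.univ.filter (fun j => ¬ f j = true)).card : ℤ) * (-(k:ℤ)) := by
    rw [Finset.sum_congr rfl (fun j hj => ?_), Finset.sum_const, nsmul_eq_mul]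
    simp only [Finset.mem_filter, Bool.not_eq_true] at hj
    simp [stp, hj.2]
  have hcards : (Finset.univ.filter (fun j => f j = true)).card
      + (Finset.univ.filter (fun j => ¬ f j = true)).card = N := by
    rw [Finset.card_filter_add_card_filter_not]
    simp
  have hff : (Finset.univ.filter (fun j => ¬ f j = true))
      = (Finset.univ.filter (fun j => f j = false)) := by
    apply Finset.filter_congr
    intro j _
    simp
  rw [hff] at hcards
  have hc2 : ((Finset.univ.filter (fun j : Fin N => f j = true)).card : ℤ)
      + ((Finset.univ.filter (fun j : Fin N => f j = false)).card : ℤ) = (N : ℤ) := by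
    exact_mod_cast hcards
  rw [hsplit, h1, h2, hff]
  linear_combination hc2

theorem mem_Sset_iff (k t n : ℕ) (f : Fin ((k+1)*n + (t+1)) → Bool) :
    f ∈ Sset k (t+1) ((k+1)*n + (t+1))
      ↔ (Finset.univ.filter (fun j => f j = false)).card = n := by
  classical
  simp only [Sset, Finset.mem_filter, Finset.mem_univ, true_and]
  rw [sum_stp_eq]
  set d := (Finset.univ.filter (fun j : Fin ((k+1)*n + (t+1)) => f j = false)).card with hd
  constructor
  · intro h
    push_cast at h
    have hkd : ((k:ℤ) + 1) * d = ((k:ℤ) + 1) * n := by nlinarith [h]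
    have : (d : ℤ) = (n : ℤ) := by
      have hk1 : ((k:ℤ) + 1) ≠ 0 := by positivity
      exact mul_left_cancel₀ hk1 hkd
    exact_mod_cast this
  · intro h
    rw [h]
    push_cast
    ring

theorem Sset_card (k t n : ℕ) :
    (Sset k (t+1) ((k+1)*n + (t+1))).card = ((k+1)*n + (t+1)).choose n := by
  classical
  have h : ((Finset.univ : Finset (Fin ((k+1)*n + (t+1)))).powersetCard n).card
      = ((k+1)*n + (t+1)).choose n := by
    rw [Finset.card_powersetCard, Finset.card_univ, Fintype.card_fin]
  rw [← h]
  apply Finset.card_bij (fun f _ => Finset.univ.filter (fun j => f j = false))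
  · intro f hf
    rw [Finset.mem_powersetCard]
    exact ⟨Finset.filter_subset _ _, (mem_Sset_iff k t n f).mp hf⟩
  · intro f hf g hg h
    funext j
    have hj := Finset.ext_iff.mp h j
    simp only [Finset.mem_filter, Finset.mem_univ, true_and] at hj
    cases hfj : f j <;> cases hgj : g j
    · rfl
    · exact absurd (hj.mp hfj) (by simp [hgj])
    · exact absurd (hj.mpr hgj) (by simp [hfj])
    · rfl
  · intro A hA
    rw [Finset.mem_powersetCard] at hA
    refine ⟨fun j => decide (j ∉ A), ?_, ?_⟩
    · rw [mem_Sset_iff]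
      have he : Finset.univ.filter (fun j => decide (j ∉ A) = false) = A := by
        ext j
        simp [decide_eq_false_iff_not]
      rw [he]
      exact hA.2
    · ext j
      simp [decide_eq_false_iff_not]

end Card
section Dyck

variable {k N : ℕ}

theorem wrd_cases (hN : 0 < N) (g : Fin N → Bool) (j : ℕ) :
    wrd k hN g j = 1 ∨ wrd k hN g j = -(k : ℤ) := stp_cases _ _

/-- prepend `t+1` up-steps to a sequence -/
def emb (t : ℕ) {L N : ℕ} (hLN : N = L + (t+1)) (f : Fin L → Bool) : Fin N → Bool :=
  fun j => if h : (j : ℕ) < t + 1 then true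
    else f ⟨(j : ℕ) - (t+1), by have hj := j.isLt; omega⟩

theorem emb_apply_lt (t : ℕ) {L N : ℕ} (hLN : N = L + (t+1)) (f : Fin L → Bool)
    (j : Fin N) (hj : j.val < t + 1) : emb t hLN f j = true := by
  simp only [emb]
  rw [dif_pos hj]

theorem emb_apply_ge (t : ℕ) {L N : ℕ} (hLN : N = L + (t+1)) (f : Fin L → Bool)
    (j : Fin N) (hj : t + 1 ≤ j.val) (hjL : j.val - (t+1) < L) :
    emb t hLN f j = f ⟨j.val - (t+1), hjL⟩ := by
  simp only [emb]
  rw [dif_neg (by omega)]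

theorem emb_apply_ge' (t : ℕ) {L N : ℕ} (hLN : N = L + (t+1)) (f : Fin L → Bool)
    (x : Fin L) :
    emb t hLN f ⟨(t+1) + x.val, by have := x.isLt; omega⟩ = f x := by
  rw [emb_apply_ge t hLN f _ (by show t+1 ≤ (t+1)+x.val; omega)
    (by show (t+1)+x.val-(t+1) < L; have := x.isLt; omega)]
  congr 1
  apply Fin.ext
  show (t+1) + x.val - (t+1) = x.val
  omega

theorem wrd_emb_lt (t : ℕ) {L N : ℕ} (hN : 0 < N) (hLN : N = L + (t+1))
    (f : Fin L → Bool) (j : ℕ) (hj : j < t + 1) :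
    wrd k hN (emb t hLN f) j = 1 := by
  rw [wrd_eq hN _ j (by omega)]
  rw [emb_apply_lt t hLN f _ (by show j < t+1; omega)]
  rfl

theorem wrd_emb_ge (t : ℕ) {L N : ℕ} (hL : 0 < L) (hN : 0 < N) (hLN : N = L + (t+1))
    (f : Fin L → Bool) (j : ℕ) (hj1 : t + 1 ≤ j) (hj2 : j < N) :
    wrd k hN (emb t hLN f) j = wrd k hL f (j - (t+1)) := by
  rw [wrd_eq hN _ j hj2, wrd_eq hL f (j - (t+1)) (by omega)]
  rw [emb_apply_ge t hLN f _ (by show t+1 ≤ j; omega) (by show j - (t+1) < L; omega)]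

theorem psum_emb_le (t : ℕ) {L N : ℕ} (hN : 0 < N) (hLN : N = L + (t+1))
    (f : Fin L → Bool) (m : ℕ) (hm : m ≤ t + 1) :
    psum (wrd k hN (emb t hLN f)) m = (m : ℤ) := by
  induction m with
  | zero => simp [psum]
  | succ m ih =>
    rw [psum_succ, ih (by omega), wrd_emb_lt t hN hLN f m (by omega)]
    push_cast
    ring

theorem psum_emb_add (t : ℕ) {L N : ℕ} (hL : 0 < L) (hN : 0 < N) (hLN : N = L + (t+1))
    (f : Fin L → Bool) (m : ℕ) (hm : m ≤ L) :
    psum (wrd k hN (emb t hLN f)) ((t+1) + m)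
      = ((t : ℤ) + 1) + psum (wrd k hL f) m := by
  rw [psum_add, psum_emb_le t hN hLN f (t+1) le_rfl]
  have h : ∑ j ∈ Finset.range m, wrd k hN (emb t hLN f) ((t+1) + j)
      = ∑ j ∈ Finset.range m, wrd k hL f j := by
    apply Finset.sum_congr rfl
    intro j hj
    simp only [Finset.mem_range] at hj
    rw [wrd_emb_ge t hL hN hLN f ((t+1)+j) (by omega) (by omega)]
    congr 1
    omega
  rw [h, psum]
  push_cast
  ring

theorem D_cond_iff (k t : ℕ) {L : ℕ} (hL : 0 < L) (f : Fin L → Bool) :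
    ((∀ i : Fin L, -(t : ℤ) ≤ ∑ j ∈ Finset.univ.filter (· ≤ i),
        (if f j then (1 : ℤ) else -(k : ℤ))) ∧
      (∑ j, (if f j then (1 : ℤ) else -(k : ℤ))) = 0)
    ↔ ((∀ m ∈ Finset.Icc 1 L, -(t : ℤ) ≤ psum (wrd k hL f) m)
        ∧ psum (wrd k hL f) L = 0) := by
  have hstp : ∀ j, (if f j then (1 : ℤ) else -(k : ℤ)) = stp k (f j) := fun j => rfl
  simp only [hstp]
  constructor
  · rintro ⟨h1, h2⟩
    refine ⟨?_, ?_⟩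
    · intro m hm
      simp only [Finset.mem_Icc] at hm
      have hh := h1 ⟨m - 1, by omega⟩
      rw [prefix_eq hL] at hh
      have hv : psum (wrd k hL f) ((⟨m - 1, by omega⟩ : Fin L).val + 1)
          = psum (wrd k hL f) m := by
        congr 1
        show m - 1 + 1 = m
        omega
      rw [hv] at hh
      exact hh
    · rw [← sum_univ_eq hL]
      exact h2
  · rintro ⟨h1, h2⟩
    refine ⟨?_, ?_⟩
    · intro i
      rw [prefix_eq hL]
      exact h1 (i.val + 1) (Finset.mem_Icc.mpr ⟨by omega, by have := i.isLt; omega⟩)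
    · rw [sum_univ_eq hL]
      exact h2

theorem Aset_true (k t : ℕ) (ht : t ≤ k) {L N : ℕ} (hN : 0 < N) (hLN : N = L + (t+1))
    (g : Fin N → Bool) (hg : g ∈ Aset k (t+1) hN) :
    ∀ j, j < t + 1 → wrd k hN g j = 1 := by
  have hpre : ∀ m ∈ Finset.Icc 1 N, 1 ≤ psum (wrd k hN g) m :=
    (Finset.mem_filter.mp hg).2
  intro j
  induction j using Nat.strong_induction_on with
  | _ j ih =>
    intro hj
    have hpsum : psum (wrd k hN g) j = (j : ℤ) := by
      rw [psum, Finset.sum_congr rfl (fun x hx =>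
        ih x (Finset.mem_range.mp hx) (by have := Finset.mem_range.mp hx; omega)),
        Finset.sum_const, Finset.card_range, nsmul_eq_mul, mul_one]
    have hgj := hpre (j + 1) (Finset.mem_Icc.mpr ⟨by omega, by omega⟩)
    rw [psum_succ, hpsum] at hgj
    rcases wrd_cases hN g j with h | h
    · exact h
    · exfalso
      rw [h] at hgj
      have ht' : (t : ℤ) ≤ (k : ℤ) := by exact_mod_cast ht
      have hj' : (j : ℤ) < (t : ℤ) + 1 := by exact_mod_cast hj
      omega

theorem dyck_card (k t n : ℕ) (ht : t ≤ k) (hL : 0 < (k+1)*n)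
    (hN : 0 < (k+1)*n + (t+1)) :
    ktDyckCount k t ((k+1)*n) = (Aset k (t+1) hN).card := by
  classical
  unfold ktDyckCount
  apply Finset.card_bij (fun f _ => emb t rfl f)
  · -- maps into Aset
    intro f hf
    simp only [Finset.mem_filter, Finset.mem_univ, true_and] at hf
    rw [D_cond_iff k t hL f] at hf
    obtain ⟨hpre, htot⟩ := hf
    rw [Aset, Finset.mem_filter]
    constructor
    · rw [Sset, Finset.mem_filter]
      refine ⟨Finset.mem_univ _, ?_⟩
      rw [sum_univ_eq hN]
      calc psum (wrd k hN (emb t rfl f)) ((k+1)*n + (t+1))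
          = psum (wrd k hN (emb t rfl f)) ((t+1) + (k+1)*n) := by
            apply congrArg
            omega
        _ = ((t : ℤ) + 1) + psum (wrd k hL f) ((k+1)*n) :=
            psum_emb_add t hL hN rfl f _ le_rfl
        _ = ((t+1 : ℕ) : ℤ) := by rw [htot]; push_cast; ring
    · intro m hm
      simp only [Finset.mem_Icc] at hm
      by_cases hmt : m ≤ t + 1
      · rw [psum_emb_le t hN rfl f m hmt]
        exact_mod_cast hm.1
      · push_neg at hmt
        have hidx : m = (t+1) + (m - (t+1)) := by omega
        rw [hidx, psum_emb_add t hL hN rfl f (m - (t+1)) (by omega)]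
        rcases Nat.eq_zero_or_pos (m - (t+1)) with h0 | h0
        · rw [h0]
          have hz : psum (wrd k hL f) 0 = 0 := by simp [psum]
          rw [hz]
          omega
        · have hp := hpre (m - (t+1)) (Finset.mem_Icc.mpr ⟨h0, by omega⟩)
          omega
  · -- injective
    intro f hf f' hf' h
    funext x
    have hx := congrFun h ⟨(t+1) + x.val, by have := x.isLt; omega⟩
    rw [emb_apply_ge' t rfl f x, emb_apply_ge' t rfl f' x] at hx
    exact hx
  · -- surjective
    intro g hg
    have htrue := Aset_true k t ht hN rfl g hg
    refine ⟨fun x : Fin ((k+1)*n) => g ⟨(t+1) + x.val, by have := x.isLt; omega⟩, ?_, ?_⟩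
    · -- membership in the Dyck set
      have hembg : emb t rfl (fun x : Fin ((k+1)*n) =>
          g ⟨(t+1) + x.val, by have := x.isLt; omega⟩) = g := by
        funext j
        by_cases hj : j.val < t + 1
        · rw [emb_apply_lt t rfl _ j hj]
          have h1 := htrue j.val hj
          rw [wrd_eq hN g j.val j.isLt] at h1
          have h2 := stp_eq_one k _ h1
          calc true = g ⟨j.val, j.isLt⟩ := h2.symm
            _ = g j := by congr 1
        · push_neg at hj
          rw [emb_apply_ge t rfl _ j hj (by have := j.isLt; omega)]
          congr 1
          apply Fin.ext
          show (t+1) + (j.val - (t+1)) = j.val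
          omega
      set f' : Fin ((k+1)*n) → Bool := fun x =>
        g ⟨(t+1) + x.val, by have := x.isLt; omega⟩ with hf'def
      have hgS : psum (wrd k hN g) ((k+1)*n + (t+1)) = ((t+1 : ℕ) : ℤ) :=
        psum_wrd_of_mem_Sset hN g (Finset.mem_filter.mp hg).1
      have hApre : ∀ m ∈ Finset.Icc 1 ((k+1)*n + (t+1)), 1 ≤ psum (wrd k hN g) m :=
        (Finset.mem_filter.mp hg).2
      have hkey : ∀ m ≤ (k+1)*n, psum (wrd k hN g) ((t+1) + m)
          = ((t : ℤ) + 1) + psum (wrd k hL f') m := by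
        intro m hm
        rw [← hembg]
        exact psum_emb_add t hL hN rfl f' m hm
      simp only [Finset.mem_filter, Finset.mem_univ, true_and]
      rw [D_cond_iff k t hL f']
      constructor
      · intro m hm
        simp only [Finset.mem_Icc] at hm
        have h1 := hApre ((t+1) + m) (Finset.mem_Icc.mpr ⟨by omega, by omega⟩)
        rw [hkey m hm.2] at h1
        omega
      · have h1 : psum (wrd k hN g) ((t+1) + (k+1)*n)
            = ((t : ℤ) + 1) + psum (wrd k hL f') ((k+1)*n) := hkey _ le_rfl
        have h2 : psum (wrd k hN g) ((t+1) + (k+1)*n)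
            = psum (wrd k hN g) ((k+1)*n + (t+1)) := by
          apply congrArg
          omega
        rw [h2, hgS] at h1
        push_cast at h1
        omega
    · -- emb of it is g
      funext j
      by_cases hj : j.val < t + 1
      · rw [emb_apply_lt t rfl _ j hj]
        have h1 := htrue j.val hj
        rw [wrd_eq hN g j.val j.isLt] at h1
        have h2 := stp_eq_one k _ h1
        calc true = g ⟨j.val, j.isLt⟩ := h2.symm
          _ = g j := by congr 1
      · push_neg at hj
        rw [emb_apply_ge t rfl _ j hj (by have := j.isLt; omega)]
        congr 1
        apply Fin.ext
        show (t+1) + (j.val - (t+1)) = j.val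
        omega

end Dyck
theorem main_theorem (k t n : ℕ) (hk : 0 < k) (ht : t ≤ k) :
    (ktDyckCount k t ((k + 1) * n) : ℚ) =
      (((t : ℚ) + 1) / ((k + 1) * n + t + 1)) * (((k + 1) * n + t + 1).choose n) := by
  rcases Nat.eq_zero_or_pos n with hn | hn
  · subst hn
    have h1 : ktDyckCount k t ((k + 1) * 0) = 1 := by
      unfold ktDyckCount
      have he : (k + 1) * 0 = 0 := by omega
      rw [Finset.filter_true_of_mem]
      · rw [Finset.card_univ]
        simp [he]
      · intro f _
        constructor
        · intro i
          rw [he] at i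
          exact absurd i.isLt (by omega)
        · apply Finset.sum_eq_zero
          intro i _
          exact absurd i.isLt (by omega)
    rw [h1]
    have ht1 : ((t : ℚ) + 1) ≠ 0 := by positivity
    rw [show (k + 1) * 0 + t + 1 = t + 1 by omega, Nat.choose_zero_right]
    push_cast
    rw [mul_zero, zero_add]
    field_simp
  · have hL : 0 < (k+1)*n := by positivity
    have hN : 0 < (k+1)*n + (t+1) := by omega
    have hkey := key_count k (t+1) (by omega) hN
    rw [Sset_card k t n] at hkey
    rw [dyck_card k t n ht hL hN]
    have hch : ((k+1)*n + (t+1)).choose n = ((k + 1) * n + t + 1).choose n := rfl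
    rw [hch] at hkey
    have hkeyQ : (((k+1)*n + (t+1) : ℕ) : ℚ) * (((Aset k (t+1) hN).card : ℕ) : ℚ)
        = (((t+1 : ℕ)) : ℚ) * ((((k + 1) * n + t + 1).choose n : ℕ) : ℚ) := by
      exact_mod_cast hkey
    have hNQ : (((k : ℚ) + 1) * n + t + 1) ≠ 0 := by positivity
    push_cast at hkeyQ
    field_simp
    linarith [hkeyQ]
end KtDyck

/-- Selkirk's theorem: for `0 ≤ t ≤ k` the number of `k_t`-Dyck paths of length
`(k+1)n` equals `((t+1)/((k+1)n+t+1)) binom((k+1)n+t+1, n)`. -/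
theorem stmt_9 (k t n : ℕ) (hk : 0 < k) (ht : t ≤ k) :
    (ktDyckCount k t ((k + 1) * n) : ℚ) =
      (((t : ℚ) + 1) / ((k + 1) * n + t + 1)) * (((k + 1) * n + t + 1).choose n) :=
  KtDyck.main_theorem k t n hk ht
end

section
/- There is an explicit bijection between k_t-Dyck paths of length (k+1)n (for 0 ≤ t ≤ k) and k-Dyck paths of length (k+1)n + t that end at height t and stay weakly above 0, given by shifting the path up by t and prepending t up-steps. -/
/-! A path staying weakly above `0` cannot take a down-step `-k` before it has climbed above
height `k - 1`, so when `t ≤ k` its first `t` steps are forced to be up-steps. Hence deleting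
them is inverse to prepending them, and prepending `t` up-steps turns the bound `-t` on the
prefix sums into the bound `0`. -/

/-- Total displacement of a path encoded as a list of booleans (`true` = up-step `+1`,
`false` = down-step `-k`). -/
def stepsSum (k : ℕ) (l : List Bool) : ℤ :=
  (l.map fun b => if b then (1 : ℤ) else -(k : ℤ)).sum

@[simp]
lemma stepsSum_nil (k : ℕ) : stepsSum k [] = 0 := rfl

@[simp]
lemma stepsSum_cons (k : ℕ) (b : Bool) (l : List Bool) :
    stepsSum k (b :: l) = (if b then 1 else -(k : ℤ)) + stepsSum k l := by
  simp [stepsSum]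

@[simp]
lemma stepsSum_append (k : ℕ) (a b : List Bool) :
    stepsSum k (a ++ b) = stepsSum k a + stepsSum k b := by
  simp [stepsSum]

@[simp]
lemma stepsSum_replicate_true (k t : ℕ) : stepsSum k (List.replicate t true) = t := by
  simp [stepsSum]

lemma prefix_nonneg_replicate_append_iff (k t : ℕ) (p : List Bool) :
    (∀ q, q <+: List.replicate t true ++ p → 0 ≤ stepsSum k q) ↔
      ∀ q, q <+: p → -(t : ℤ) ≤ stepsSum k q := by
  constructor
  · intro h q hq
    have := h _ ((List.prefix_append_right_inj _).2 hq)
    rw [stepsSum_append, stepsSum_replicate_true] at this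
    omega
  · intro h q hq
    rcases List.prefix_or_prefix_of_prefix hq (List.prefix_append _ _) with hq | ⟨r, rfl⟩
    · have hq_eq : q = List.replicate q.length true :=
        List.eq_replicate_iff.2 ⟨rfl, fun b hb => List.eq_of_mem_replicate (hq.subset hb)⟩
      rw [hq_eq, stepsSum_replicate_true]
      positivity
    · have := h r ((List.prefix_append_right_inj _).1 hq)
      rw [stepsSum_append, stepsSum_replicate_true]
      omega

lemma forall_mem_take_eq_true_of_prefix_nonneg {k : ℕ} :
    ∀ {m t : ℕ} {p : List Bool}, m + t ≤ k →
      (∀ q, q <+: p → 0 ≤ (m : ℤ) + stepsSum k q) → ∀ b ∈ p.take t, b = true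
  | _, 0, _, _, _ => by simp
  | _, _ + 1, [], _, _ => by simp
  | m, t + 1, b :: p, hmt, hp => by
    have hb : b = true := by
      cases b with
      | true => rfl
      | false =>
        have := hp [false] ((List.prefix_cons_inj _).2 List.nil_prefix)
        simp only [stepsSum_cons, stepsSum_nil, Bool.false_eq_true, if_false] at this
        omega
    subst hb
    have hrest : ∀ q, q <+: p → 0 ≤ ((m + 1 : ℕ) : ℤ) + stepsSum k q := fun q hq => by
      have := hp (true :: q) ((List.prefix_cons_inj _).2 hq)
      simp only [stepsSum_cons, if_true] at this
      push_cast
      omega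
    simpa using forall_mem_take_eq_true_of_prefix_nonneg (by omega) hrest

lemma replicate_append_drop_of_prefix_nonneg {k t : ℕ} (ht : t ≤ k) {p : List Bool}
    (hlen : t ≤ p.length) (hp : ∀ q, q <+: p → 0 ≤ stepsSum k q) :
    List.replicate t true ++ p.drop t = p := by
  have hmt : 0 + t ≤ k := by omega
  have htake : p.take t = List.replicate t true :=
    List.eq_replicate_iff.2 ⟨List.length_take_of_le hlen,
      forall_mem_take_eq_true_of_prefix_nonneg hmt (by simpa using hp)⟩
  rw [← htake, List.take_append_drop]

theorem stmt_11_general (k t n : ℕ) (ht : t ≤ k) :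
    ∃ e : {p : List Bool // p.length = (k + 1) * n ∧ stepsSum k p = 0 ∧
            ∀ q, q <+: p → -(t : ℤ) ≤ stepsSum k q} ≃
          {p : List Bool // p.length = (k + 1) * n + t ∧ stepsSum k p = t ∧
            ∀ q, q <+: p → 0 ≤ stepsSum k q},
      ∀ p, (e p).val = List.replicate t true ++ p.val := by
  refine ⟨{ toFun := fun p => ⟨List.replicate t true ++ p.val, ?_⟩
            invFun := fun p => ⟨p.val.drop t, ?_⟩
            left_inv := fun p => Subtype.ext (List.drop_left' List.length_replicate)
            right_inv := fun ⟨p, hlen, _, hpre⟩ =>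
              Subtype.ext (replicate_append_drop_of_prefix_nonneg ht (p := p) (by omega) hpre) },
    fun _ => rfl⟩
  · obtain ⟨p, hlen, hsum, hpre⟩ := p
    refine ⟨by simp [hlen, add_comm], by simp [hsum], ?_⟩
    exact (prefix_nonneg_replicate_append_iff k t p).2 hpre
  · obtain ⟨p, hlen, hsum, hpre⟩ := p
    have hp := replicate_append_drop_of_prefix_nonneg ht (by omega) hpre
    generalize p.drop t = s at hp ⊢
    subst hp
    simp only [List.length_append, List.length_replicate, stepsSum_append,
      stepsSum_replicate_true] at hlen hsum
    refine ⟨by omega, by omega, ?_⟩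
    exact (prefix_nonneg_replicate_append_iff k t _).1 hpre

/-- For `0 ≤ t ≤ k`, prepending `t` up-steps (after shifting the path up by `t`) is a
bijection between `k_t`-Dyck paths of length `(k+1)n` and nonnegative `k`-Dyck paths of
length `(k+1)n + t` ending at height `t`. -/
theorem stmt_11 (k t n : ℕ) (hk : 0 < k) (ht : t ≤ k) :
    ∃ e : {p : List Bool // p.length = (k + 1) * n ∧ stepsSum k p = 0 ∧
            ∀ q, q <+: p → -(t : ℤ) ≤ stepsSum k q} ≃
          {p : List Bool // p.length = (k + 1) * n + t ∧ stepsSum k p = t ∧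
            ∀ q, q <+: p → 0 ≤ stepsSum k q},
      ∀ p, (e p).val = List.replicate t true ++ p.val :=
  stmt_11_general k t n ht
end

section
/- For fixed t and k, the limit as n → ∞ of the ratio [number of k_t-Dyck paths of length (k+1)n] / [ ((t+1)/((k+1)n+t+1)) binom((k+1)n+t+1, n) ] equals sum over 0 ≤ ℓ ≤ t/k of binom(t-kℓ, ℓ) * (-ρ)^ℓ, where ρ = k^k/(k+1)^(k+1). -/
/-!
Let `Q_B(z)` be the generating function of the paths with steps `+1, -k` that start at `0`, never
go below `0` and end at height `B`, and let `D_t(z) = ∑_ℓ (-1)^ℓ binom(t - kℓ, ℓ) z^((k+1)ℓ)`.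
Splitting off the last step, the coefficients of `D_t Q_B` satisfy the recursion of the path counts
`Q_B` up to a correction `[B = 0] [z^(s+1)] D_t`, which vanishes once `s ≥ t`. The number of paths
of length `L` that stay above `-t` and end at `c` is therefore `[z^(L+t)] D_t Q_(c+t)`, provided the
two agree at `L = 0`; this holds because `[z^s] D_t Q_(s-(k+1)j) = (-1)^j binom(t-s+j-1, j)` for
`s ≤ t`, which is `[j = 0]` at `s = t`.

By the ballot theorem the coefficients of `Q_t` are Raney numbers `R(m)`, so the number of
`k_t`-Dyck paths of length `(k+1)n` is `∑_ℓ (-1)^ℓ binom(t - kℓ, ℓ) R(n - ℓ)`, and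
`R(n - ℓ) / R(n) → ρ^ℓ` because `R(n) / R(n+1)` is a ratio of products of linear functions of `n`
tending to `ρ`.
-/

open Finset Filter

open PowerSeries
open scoped Nat Topology

def pathStep (k : ℕ) (b : Bool) : ℤ := if b then 1 else -k

abbrev IsBoundedPath (k t : ℕ) (c : ℤ) {L : ℕ} (f : Fin L → Bool) : Prop :=
  (∀ i, -(t : ℤ) ≤ ∑ j ∈ univ.filter (· ≤ i), pathStep k (f j)) ∧ ∑ j, pathStep k (f j) = c

def boundedPathCount (k t L : ℕ) (c : ℤ) : ℕ :=
  #{f : Fin L → Bool | IsBoundedPath k t c f}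

theorem ktDyckCount_eq_boundedPathCount (k t L : ℕ) :
    ktDyckCount k t L = boundedPathCount k t L 0 := rfl

theorem isBoundedPath_snoc {k t L : ℕ} {c : ℤ} (g : Fin L → Bool) (b : Bool) :
    IsBoundedPath k t c (Fin.snoc g b : Fin (L + 1) → Bool) ↔
      -(t : ℤ) ≤ c ∧ IsBoundedPath k t (c - pathStep k b) g := by
  set f : Fin (L + 1) → Bool := Fin.snoc g b with hf
  have hinit (i : Fin L) : ∑ j ∈ univ.filter (· ≤ i.castSucc), pathStep k (f j) =
      ∑ j ∈ univ.filter (· ≤ i), pathStep k (g j) := by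
    simp [hf, sum_filter, Fin.sum_univ_castSucc, (Fin.castSucc_lt_last i).not_ge]
  have htotal : ∑ j, pathStep k (f j) = ∑ j, pathStep k (g j) + pathStep k b := by
    simp [hf, Fin.sum_univ_castSucc]
  have hlast : ∑ j ∈ univ.filter (· ≤ Fin.last L), pathStep k (f j) = ∑ j, pathStep k (f j) := by
    simp [Fin.le_last]
  simp only [IsBoundedPath, Fin.forall_fin_succ', hinit, hlast, htotal, eq_sub_iff_add_eq]
  constructor
  · rintro ⟨⟨h, hc⟩, rfl⟩; exact ⟨hc, h, rfl⟩
  · rintro ⟨hc, h, rfl⟩; exact ⟨⟨h, hc⟩, rfl⟩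

theorem boundedPathCount_zero (k t : ℕ) (c : ℤ) :
    boundedPathCount k t 0 c = if c = 0 then 1 else 0 := by
  by_cases hc : c = 0 <;> simp [boundedPathCount, IsBoundedPath, hc, eq_comm]

theorem boundedPathCount_succ (k t L : ℕ) (c : ℤ) :
    boundedPathCount k t (L + 1) c =
      if -(t : ℤ) ≤ c then boundedPathCount k t L (c - 1) + boundedPathCount k t L (c + k)
      else 0 := by
  simp only [boundedPathCount, card_filter]
  rw [← (Fin.snocEquiv fun _ => Bool).sum_comp, Fintype.sum_prod_type, Fintype.sum_bool]
  simp only [Fin.snocEquiv, Equiv.coe_fn_mk, isBoundedPath_snoc, pathStep]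
  split_ifs <;> simp_all [sub_neg_eq_add]

theorem boundedPathCount_of_lt_neg {k t : ℕ} (L : ℕ) {c : ℤ} (hc : c < -t) :
    boundedPathCount k t L c = 0 := by
  cases L with
  | zero => rw [boundedPathCount_zero, if_neg (by omega)]
  | succ L => rw [boundedPathCount_succ, if_neg (by omega)]

theorem boundedPathCount_of_lt {k t L : ℕ} {c : ℤ} (hc : (L : ℤ) < c) :
    boundedPathCount k t L c = 0 := by
  induction L generalizing c with
  | zero => rw [boundedPathCount_zero, if_neg (by omega)]
  | succ L ih =>
    rw [boundedPathCount_succ, ih (by omega), ih (by omega)]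
    simp

noncomputable def raney (p r n : ℕ) : ℝ := r / (p * n + r) * (p * n + r).choose n

theorem raney_zero_middle (p n : ℕ) : raney p 0 n = 0 := by simp [raney]

theorem raney_succ_zero (p r : ℕ) : raney p (r + 1) 0 = 1 := by
  simp [raney]; positivity

theorem raney_succ_succ {p : ℕ} (hp : 0 < p) (r n : ℕ) :
    raney p (r + 1) (n + 1) = raney p r (n + 1) + raney p (r + p) n := by
  obtain ⟨N, hN⟩ : ∃ N, p * (n + 1) + r = N := ⟨_, rfl⟩
  have hnN : n + 1 ≤ N := by nlinarith
  have hrel : (N.choose (n + 1) : ℝ) * (n + 1) = N.choose n * (N - n) := by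
    rw [← Nat.cast_sub (by omega)]; exact_mod_cast Nat.choose_succ_right_eq N n
  have hNR : (N : ℝ) = p * (n + 1) + r := by rw [← hN]; push_cast; ring
  rw [raney, raney, raney, show p * (n + 1) + (r + 1) = N + 1 by omega,
    show p * n + (r + p) = N by rw [← hN]; ring, hN, Nat.choose_succ_succ', Nat.cast_add]
  push_cast
  rw [← hNR, show (p : ℝ) * n + (r + p) = N by rw [hNR]; ring]
  have hN0 : (0 : ℝ) < N := by rw [hNR]; positivity
  field_simp
  rw [hNR] at hrel ⊢
  linear_combination (p : ℝ) * hrel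

theorem raney_pos (k s n : ℕ) : 0 < raney (k + 1) (s + 1) n := by
  have : 0 < ((k + 1) * n + (s + 1)).choose n := Nat.choose_pos (by nlinarith)
  unfold raney; positivity

theorem raney_eq_factorial (k s n : ℕ) :
    raney (k + 1) (s + 1) n = (s + 1) * ((k + 1) * n + s)! / (n ! * (k * n + s + 1)!) := by
  rw [raney, Nat.cast_choose ℝ (by nlinarith),
    show (k + 1) * n + (s + 1) = (k + 1) * n + s + 1 by ring, Nat.factorial_succ,
    show (k + 1) * n + s + 1 - n = k * n + s + 1 by rw [add_mul, one_mul]; omega]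
  push_cast
  field_simp
  ring

theorem raney_succ_mul_ascFactorial (k s n : ℕ) :
    raney (k + 1) (s + 1) (n + 1) * ((n + 1) * (k * n + (s + 2)).ascFactorial k) =
      raney (k + 1) (s + 1) n * ((k + 1) * n + (s + 1)).ascFactorial (k + 1) := by
  have h1 := Nat.factorial_mul_ascFactorial ((k + 1) * n + s) (k + 1)
  have h2 := Nat.factorial_mul_ascFactorial (k * n + s + 1) k
  rw [add_assoc] at h1
  rw [show k * n + s + 1 + 1 = k * n + (s + 2) by ring] at h2
  have hA : (0 : ℝ) < (k * n + (s + 2)).ascFactorial k := mod_cast Nat.ascFactorial_pos _ _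
  rw [raney_eq_factorial, raney_eq_factorial,
    show (k + 1) * (n + 1) + s = (k + 1) * n + s + (k + 1) by ring,
    show k * (n + 1) + s + 1 = k * n + s + 1 + k by ring, ← h1, ← h2, Nat.factorial_succ]
  push_cast
  field_simp

theorem boundedPathCount_zero_eq_raney (k : ℕ) {A d B : ℕ} (h : A = (k + 1) * d + B) :
    (boundedPathCount k 0 A B : ℝ) = raney (k + 1) (B + 1) d := by
  induction A generalizing d B with
  | zero =>
    obtain ⟨rfl, rfl⟩ : d = 0 ∧ B = 0 := by constructor <;> nlinarith
    simp [boundedPathCount_zero, raney_succ_zero]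
  | succ A ih =>
    rw [boundedPathCount_succ, if_pos (by simp), Nat.cast_add]
    rcases d with _ | d
    · obtain rfl : B = A + 1 := by simpa using h.symm
      rw [show ((A + 1 : ℕ) : ℤ) - 1 = A by push_cast; ring, ih (d := 0) (B := A) (by simp),
        boundedPathCount_of_lt (c := ((A + 1 : ℕ) : ℤ) + k) (by push_cast; omega),
        raney_succ_zero, raney_succ_zero]
      simp
    rw [show (B : ℤ) + k = ((B + k : ℕ) : ℤ) by push_cast; ring,
      ih (d := d) (B := B + k) (by rw [mul_add_one] at h; omega)]
    rcases B with _ | B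
    · rw [boundedPathCount_of_lt_neg _ (by simp), Nat.cast_zero, zero_add,
        raney_succ_succ (by omega), raney_zero_middle]
      ring_nf
    · rw [show ((B + 1 : ℕ) : ℤ) - 1 = B by push_cast; ring, ih (d := d + 1) (B := B) (by omega),
        raney_succ_succ (by omega) (B + 1)]
      ring_nf

noncomputable def ballotSeries (k : ℕ) (B : ℤ) : ℤ⟦X⟧ :=
  mk fun A => boundedPathCount k 0 A B

theorem ballotSeries_of_neg (k : ℕ) {B : ℤ} (hB : B < 0) : ballotSeries k B = 0 := by
  ext A
  simp [ballotSeries, boundedPathCount_of_lt_neg (t := 0) A (c := B) (by omega)]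

theorem ballotSeries_eq (k : ℕ) {B : ℤ} (hB : 0 ≤ B) :
    ballotSeries k B = X * (ballotSeries k (B - 1) + ballotSeries k (B + k)) +
      if B = 0 then 1 else 0 := by
  ext (_ | A)
  · simp [ballotSeries, boundedPathCount_zero]
  · simp [ballotSeries, boundedPathCount_succ, hB, apply_ite (coeff (A + 1))]

section Convolution

variable {k : ℕ} (F : ℤ⟦X⟧)

theorem coeff_zero_mul_ballotSeries (B : ℤ) :
    coeff 0 (F * ballotSeries k B) = if B = 0 then coeff 0 F else 0 := by
  simp [ballotSeries, boundedPathCount_zero]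

theorem coeff_succ_mul_ballotSeries (s : ℕ) {B : ℤ} (hB : 0 ≤ B) :
    coeff (s + 1) (F * ballotSeries k B) =
      coeff s (F * ballotSeries k (B - 1)) + coeff s (F * ballotSeries k (B + k)) +
        if B = 0 then coeff (s + 1) F else 0 := by
  rw [ballotSeries_eq k hB, mul_add, mul_left_comm, map_add, coeff_succ_X_mul, mul_add, map_add]
  split_ifs <;> simp

theorem coeff_mul_ballotSeries_of_lt {s : ℕ} {B : ℤ} (hB : (s : ℤ) < B) :
    coeff s (F * ballotSeries k B) = 0 := by
  rw [coeff_mul]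
  refine sum_eq_zero fun ij hij => ?_
  have : ij.1 + ij.2 = s := mem_antidiagonal.mp hij
  simp [ballotSeries, boundedPathCount_of_lt (show (ij.2 : ℤ) < B by omega)]

theorem coeff_mul_ballotSeries_self (s : ℕ) :
    coeff s (F * ballotSeries k s) = coeff 0 F := by
  induction s with
  | zero => simp [coeff_zero_mul_ballotSeries]
  | succ s ih =>
    push_cast
    rw [coeff_succ_mul_ballotSeries F s (by positivity), add_sub_cancel_right, ih,
      coeff_mul_ballotSeries_of_lt F (by omega), if_neg (by omega)]
    simp

end Convolution

theorem choose_sub_mul_eq_zero {k t ℓ : ℕ} (h : t < (k + 1) * ℓ) : (t - k * ℓ).choose ℓ = 0 :=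
  Nat.choose_eq_zero_of_lt <| by
    rcases Nat.eq_zero_or_pos ℓ with rfl | hℓ
    · omega
    · rw [add_mul, one_mul] at h; omega

/-- The paper's `D_t(z)`. -/
noncomputable def altChooseSeries (k t : ℕ) : ℤ⟦X⟧ :=
  ∑ ℓ ∈ range (t / k + 1), C ((-1 : ℤ) ^ ℓ * (t - k * ℓ).choose ℓ) * X ^ ((k + 1) * ℓ)

theorem coeff_altChooseSeries (k t i : ℕ) :
    coeff i (altChooseSeries k t) = ∑ ℓ ∈ range (t / k + 1),
      if i = (k + 1) * ℓ then (-1) ^ ℓ * ((t - k * ℓ).choose ℓ : ℤ) else 0 := by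
  simp only [altChooseSeries, map_sum, coeff_C_mul, coeff_X_pow, mul_ite, mul_one, mul_zero]

theorem coeff_altChooseSeries_of_lt {k t i : ℕ} (h : t < i) :
    coeff i (altChooseSeries k t) = 0 := by
  rw [coeff_altChooseSeries]
  refine sum_eq_zero fun ℓ _ => ?_
  split_ifs with hi
  · rw [choose_sub_mul_eq_zero (hi ▸ h), Nat.cast_zero, mul_zero]
  · rfl

theorem coeff_mul_altChooseSeries {k : ℕ} (hk : 0 < k) (t j : ℕ) :
    coeff ((k + 1) * j) (altChooseSeries k t) = (-1) ^ j * ((t - k * j).choose j : ℤ) := by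
  simp only [coeff_altChooseSeries, mul_right_inj' (Nat.succ_ne_zero k), sum_ite_eq, mem_range]
  split_ifs with hj
  · rfl
  · rw [choose_sub_mul_eq_zero, Nat.cast_zero, mul_zero]
    have := Nat.lt_mul_div_succ t hk
    nlinarith

theorem coeff_altChooseSeries_mul_ballotSeries {k : ℕ} (hk : 0 < k) {t s j : ℕ}
    (hj : (k + 1) * j ≤ s) (hs : s ≤ t) :
    coeff s (altChooseSeries k t * ballotSeries k (s - (k + 1) * j)) =
      (-1) ^ j * ((t - s + j - 1).choose j : ℤ) := by
  induction s generalizing j with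
  | zero =>
    obtain rfl : j = 0 := by simpa using hj
    simpa [coeff_zero_mul_ballotSeries] using coeff_mul_altChooseSeries hk t 0
  | succ s ih =>
    rcases j with _ | j
    · simpa using (coeff_mul_ballotSeries_self _ (s + 1)).trans
        (by simpa using coeff_mul_altChooseSeries hk t 0)
    have hjs : (k + 1) * j ≤ s := by rw [mul_add_one] at hj; omega
    have hB : (0 : ℤ) ≤ s + 1 - (k + 1) * (j + 1) := by
      rw [sub_nonneg]; exact_mod_cast hj
    push_cast
    rw [coeff_succ_mul_ballotSeries _ s hB,
      show (s + 1 - (k + 1) * (j + 1) + k : ℤ) = s - (k + 1) * j by ring, ih hjs (by omega),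
      show t - (s + 1) + (j + 1) - 1 = t - s + j - 1 by omega]
    -- The step down from height `s + 1 - (k+1)(j+1)` and, when that height is `0`, the
    -- correction term from `D_t` together give the same binomial.
    have hdown : coeff s (altChooseSeries k t * ballotSeries k (s + 1 - (k + 1) * (j + 1) - 1)) +
        (if (s + 1 - (k + 1) * (j + 1) : ℤ) = 0 then coeff (s + 1) (altChooseSeries k t) else 0) =
        (-1) ^ (j + 1) * ((t - s + j).choose (j + 1) : ℤ) := by
      rcases hj.lt_or_eq with hlt | heq
      · have := ih (j := j + 1) (by omega) (by omega)
        push_cast at this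
        zify at hlt
        rw [show (s + 1 - (k + 1) * (j + 1) - 1 : ℤ) = s - (k + 1) * (j + 1) by ring, this,
          if_neg (by intro h; linarith), add_zero, show t - s + (j + 1) - 1 = t - s + j by omega]
      · have hD : t - k * (j + 1) = t - s + j := by rw [add_mul, one_mul] at heq; omega
        rw [← heq, coeff_mul_altChooseSeries hk, hD]
        zify at heq
        rw [ballotSeries_of_neg k (by linarith), mul_zero, map_zero, zero_add,
          if_pos (by linarith)]
    obtain ⟨m, hm, hm'⟩ : ∃ m, t - s + j - 1 = m ∧ t - s + j = m + 1 := ⟨_, rfl, by omega⟩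
    rw [add_right_comm, hdown, hm, hm', Nat.choose_succ_succ', Nat.cast_add]
    ring

theorem coeff_altChooseSeries_mul_ballotSeries_sub {k : ℕ} (hk : 0 < k) {t j : ℕ}
    (hj : (k + 1) * j ≤ t) :
    coeff t (altChooseSeries k t * ballotSeries k (t - (k + 1) * j)) = if j = 0 then 1 else 0 := by
  rw [coeff_altChooseSeries_mul_ballotSeries hk hj le_rfl, Nat.sub_self, zero_add]
  rcases j with _ | j
  · simp
  · simp

-- A path of length `L` ends at a height `c ≡ L (mod k+1)`; restricting to those heights, the
-- initial condition is only needed at the heights `t - (k+1)j` covered by the lemma above.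
theorem boundedPathCount_eq_coeff {k : ℕ} (hk : 0 < k) (t L : ℕ) {c : ℤ} (hc : -(t : ℤ) ≤ c)
    (hLc : (k + 1 : ℤ) ∣ L - c) :
    (boundedPathCount k t L c : ℤ) =
      coeff (L + t) (altChooseSeries k t * ballotSeries k (c + t)) := by
  induction L generalizing c with
  | zero =>
    rw [boundedPathCount_zero, zero_add]
    rw [Nat.cast_zero, zero_sub] at hLc
    rcases lt_or_ge 0 c with hpos | hnonpos
    · rw [if_neg hpos.ne', coeff_mul_ballotSeries_of_lt _ (by omega), Nat.cast_zero]
    obtain ⟨j, hj⟩ := hLc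
    lift j to ℕ using by nlinarith
    have hjt : (k + 1) * j ≤ t := by zify; linarith
    rw [show c + t = t - (k + 1) * (j : ℤ) by linarith,
      coeff_altChooseSeries_mul_ballotSeries_sub hk hjt]
    rcases j with _ | j
    · simp_all
    · rw [if_neg (by push_cast at hj; nlinarith)]
      simp
  | succ L ih =>
    have hdvd : (k + 1 : ℤ) ∣ L - (c + k) := by
      rw [show (L : ℤ) - (c + k) = ((L + 1 : ℕ) : ℤ) - c - (k + 1) by push_cast; ring]
      exact dvd_sub hLc dvd_rfl
    rw [boundedPathCount_succ, if_pos hc, add_right_comm,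
      coeff_succ_mul_ballotSeries _ _ (by omega), coeff_altChooseSeries_of_lt (by omega),
      ite_self, add_zero, Nat.cast_add, show c + t + k = c + k + t by ring,
      ← ih (by omega) hdvd]
    rcases hc.lt_or_eq with hlt | heq
    · rw [show c + t - 1 = c - 1 + t by ring,
        ← ih (by omega) (by rwa [sub_sub_eq_add_sub, ← Nat.cast_succ])]
    · rw [← heq, boundedPathCount_of_lt_neg L (by omega), neg_add_cancel, zero_sub,
        ballotSeries_of_neg k (by norm_num), mul_zero, map_zero, Nat.cast_zero]

theorem ktDyckCount_eq_sum_raney {k : ℕ} (hk : 0 < k) (t : ℕ) {n : ℕ} (hn : t / k ≤ n) :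
    (ktDyckCount k t ((k + 1) * n) : ℝ) = ∑ ℓ ∈ range (t / k + 1),
      (-1) ^ ℓ * ((t - k * ℓ).choose ℓ : ℝ) * raney (k + 1) (t + 1) (n - ℓ) := by
  have h := boundedPathCount_eq_coeff hk t ((k + 1) * n) (c := 0) (by simp) (by simp)
  rw [zero_add, altChooseSeries, sum_mul, map_sum] at h
  rw [← Int.cast_natCast, ktDyckCount_eq_boundedPathCount, h, Int.cast_sum]
  refine sum_congr rfl fun ℓ hℓ => ?_
  have hℓn : (k + 1) * ℓ ≤ (k + 1) * n :=
    Nat.mul_le_mul_left _ ((Nat.lt_succ_iff.mp (mem_range.mp hℓ)).trans hn)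
  rw [mul_assoc, coeff_C_mul, coeff_X_pow_mul', if_pos (by omega),
    show (k + 1) * n + t - (k + 1) * ℓ = (k + 1) * (n - ℓ) + t by rw [Nat.mul_sub]; omega,
    ballotSeries, coeff_mk, Int.cast_mul, Int.cast_natCast,
    boundedPathCount_zero_eq_raney k rfl]
  push_cast
  ring

theorem tendsto_mul_add_div_self (a b : ℝ) :
    Tendsto (fun n : ℕ => (a * n + b) / n) atTop (𝓝 a) := by
  have := (tendsto_const_div_atTop_nhds_zero_nat b).const_add a
  rw [add_zero] at this
  refine this.congr' ?_
  filter_upwards [eventually_ne_atTop 0] with n hn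
  field_simp

theorem tendsto_ascFactorial_div_pow (a b m : ℕ) :
    Tendsto (fun n : ℕ => ((a * n + b).ascFactorial m : ℝ) / (n : ℝ) ^ m) atTop
      (𝓝 ((a : ℝ) ^ m)) := by
  induction m with
  | zero => simp
  | succ m ih =>
    have := (tendsto_mul_add_div_self a (b + m)).mul ih
    rw [← pow_succ'] at this
    refine this.congr' ?_
    filter_upwards [eventually_ne_atTop 0] with n hn
    rw [Nat.ascFactorial_succ]
    push_cast
    field_simp
    ring

theorem tendsto_raney_div_raney_succ (k s : ℕ) :
    Tendsto (fun n => raney (k + 1) (s + 1) n / raney (k + 1) (s + 1) (n + 1)) atTop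
      (𝓝 ((k : ℝ) ^ k / (k + 1) ^ (k + 1))) := by
  have := ((tendsto_mul_add_div_self 1 1).mul (tendsto_ascFactorial_div_pow k (s + 2) k)).div
    (tendsto_ascFactorial_div_pow (k + 1) (s + 1) (k + 1)) (by positivity)
  rw [one_mul, Nat.cast_add_one] at this
  refine this.congr' ?_
  filter_upwards [eventually_ne_atTop 0] with n hn
  have hA : (0 : ℝ) < ((k + 1) * n + (s + 1)).ascFactorial (k + 1) :=
    mod_cast Nat.ascFactorial_pos _ _
  rw [Pi.div_apply, eq_div_iff (raney_pos k s (n + 1)).ne', one_mul]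
  field_simp
  linear_combination (n : ℝ) ^ (k + 1) * raney_succ_mul_ascFactorial k s n

theorem tendsto_sub_div_pow_of_tendsto_div_succ {u : ℕ → ℝ} {ρ : ℝ} (hu : ∀ n, u n ≠ 0)
    (h : Tendsto (fun n => u n / u (n + 1)) atTop (𝓝 ρ)) (ℓ : ℕ) :
    Tendsto (fun n => u (n - ℓ) / u n) atTop (𝓝 (ρ ^ ℓ)) := by
  induction ℓ with
  | zero => simp [div_self (hu _)]
  | succ ℓ ih =>
    rw [pow_succ']
    refine ((h.comp (tendsto_sub_atTop_nat (ℓ + 1))).mul ih).congr' ?_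
    filter_upwards [eventually_ge_atTop (ℓ + 1)] with n hn
    rw [Function.comp_apply, show n - (ℓ + 1) + 1 = n - ℓ by omega, div_mul_div_cancel₀ (hu _)]

/-- As `n → ∞`, the ratio of the number of `k_t`-Dyck paths of length `(k+1)n` to
`((t+1)/((k+1)n+t+1)) binom((k+1)n+t+1, n)` tends to
`∑_{0 ≤ ℓ ≤ t/k} binom(t-kℓ, ℓ) (-ρ)^ℓ` with `ρ = k^k/(k+1)^(k+1)`. -/
theorem stmt_13 (k t : ℕ) (hk : 0 < k) :
    Tendsto (fun n : ℕ =>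
        (ktDyckCount k t ((k + 1) * n) : ℝ) /
          ((((t : ℝ) + 1) / ((k + 1) * n + t + 1)) * (((k + 1) * n + t + 1).choose n)))
      atTop
      (nhds (∑ ℓ ∈ Finset.range (t / k + 1),
        ((t - k * ℓ).choose ℓ : ℝ) * (-((k : ℝ) ^ k / (k + 1) ^ (k + 1))) ^ ℓ)) := by
  set ρ : ℝ := (k : ℝ) ^ k / (k + 1) ^ (k + 1)
  have hR (n : ℕ) : ((t : ℝ) + 1) / ((k + 1) * n + t + 1) * (((k + 1) * n + t + 1).choose n) =
      raney (k + 1) (t + 1) n := by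
    simp only [raney, Nat.cast_add, Nat.cast_one, add_assoc]
  have hval : ∑ ℓ ∈ range (t / k + 1), ((t - k * ℓ).choose ℓ : ℝ) * (-ρ) ^ ℓ =
      ∑ ℓ ∈ range (t / k + 1), (-1) ^ ℓ * ((t - k * ℓ).choose ℓ : ℝ) * ρ ^ ℓ :=
    sum_congr rfl fun ℓ _ => by rw [neg_pow]; ring
  have hlim := tendsto_finsetSum (range (t / k + 1)) fun ℓ _ =>
    (tendsto_sub_div_pow_of_tendsto_div_succ (fun n => (raney_pos k t n).ne')
      (tendsto_raney_div_raney_succ k t) ℓ).const_mul ((-1) ^ ℓ * ((t - k * ℓ).choose ℓ : ℝ))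
  simp only [hR, hval]
  refine hlim.congr' ?_
  filter_upwards [eventually_ge_atTop (t / k)] with n hn
  rw [ktDyckCount_eq_sum_raney hk t hn, sum_div]
  exact sum_congr rfl fun ℓ _ => (mul_div_assoc _ _ _).symm
end

section
/- For k = 1, the generating function (by half-length) of lattice paths with steps ±1 starting and ending at 0 and staying weakly above -t is G(x) = (1+u)(1-u^(t+1))/(1-u), where x = u/(1+u)^2. Equivalently, lim_{i→∞} D_t D_i / D_{i+t+1} = (1+u)(1-u^(t+1))/(1-u). -/
/-!
By the reflection principle, the number of `±1`-paths of length `L` from `0` to `h ≥ -t - 1`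
staying weakly above `-t` is `F L h - F L (-h - 2t - 2)`, where `F` counts unrestricted paths;
both sides obey the same recursion in `L`, and the right side vanishes on the barrier
`h = -t - 1`. The series `T m = ∑ₙ F (2n) (2m) xⁿ` satisfy
`T m = [m = 0] + x (T (m - 1) + 2 T m + T (m + 1))`, a system with a unique power-series
solution, and `x (1 + u)² = u` shows that `(1 - u) T m = u^|m| (1 + u)` solves it. Hence
`(1 - u) ∑ₙ dyckBelowCount t (2n) xⁿ = (1 - u) (T 0 - T (-(t + 1))) = (1 + u) (1 - u^(t+1))`.
-/

open Finset PowerSeries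

/-- The number of `±1`-paths of length `L` starting and ending at 0 and staying weakly
above `-t`. -/
def dyckBelowCount (t L : ℕ) : ℕ :=
  (Finset.univ.filter (fun f : Fin L → Bool =>
    (∀ i : Fin L, -(t : ℤ) ≤ ∑ j ∈ Finset.univ.filter (· ≤ i),
        (if f j then (1 : ℤ) else -1)) ∧
    (∑ j, (if f j then (1 : ℤ) else -1)) = 0)).card

namespace LatticePath

def step (b : Bool) : ℤ := if b then 1 else -1

def height {L : ℕ} (f : Fin L → Bool) (i : Fin L) : ℤ :=
  ∑ j ∈ univ.filter (· ≤ i), step (f j)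

def endpoint {L : ℕ} (f : Fin L → Bool) : ℤ := ∑ j, step (f j)

section Snoc

variable {L : ℕ}

lemma endpoint_snoc (f : Fin L → Bool) (b : Bool) :
    endpoint (Fin.snoc f b : Fin (L + 1) → Bool) = endpoint f + step b := by
  simp [endpoint, Fin.sum_univ_castSucc]

lemma height_snoc_castSucc (f : Fin L → Bool) (b : Bool) (i : Fin L) :
    height (Fin.snoc f b : Fin (L + 1) → Bool) i.castSucc = height f i := by
  simp only [height, filter_ge_eq_Iic, ← Fin.map_castSuccEmb_Iic, sum_map]
  simp

lemma height_last (f : Fin (L + 1) → Bool) : height f (Fin.last L) = endpoint f := by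
  simp [height, endpoint, Fin.le_last]

lemma forall_height_snoc_iff (p : ℤ → Prop) (f : Fin L → Bool) (b : Bool) :
    (∀ i, p (height (Fin.snoc f b : Fin (L + 1) → Bool) i)) ↔
      (∀ i, p (height f i)) ∧ p (endpoint f + step b) := by
  rw [Fin.forall_fin_succ', height_last, endpoint_snoc]
  simp only [height_snoc_castSucc]

end Snoc

section Count

variable (p : ℤ → Prop) [DecidablePred p]

def walkCount (L : ℕ) (h : ℤ) : ℕ :=
  (univ.filter fun f : Fin L → Bool => (∀ i, p (height f i)) ∧ endpoint f = h).card

lemma walkCount_zero (h : ℤ) : walkCount p 0 h = if h = 0 then 1 else 0 := by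
  by_cases h0 : h = 0 <;> simp [walkCount, endpoint, h0, eq_comm]

lemma walkCount_succ (L : ℕ) (h : ℤ) :
    walkCount p (L + 1) h =
      if p h then walkCount p L (h - 1) + walkCount p L (h + 1) else 0 := by
  have hsnoc : ∀ (f : Fin L → Bool) (b : Bool),
      ((∀ i, p (height (Fin.snoc f b : Fin (L + 1) → Bool) i)) ∧
          endpoint (Fin.snoc f b : Fin (L + 1) → Bool) = h) ↔
        p h ∧ (∀ i, p (height f i)) ∧ endpoint f = h - step b := by
    intro f b
    rw [forall_height_snoc_iff, endpoint_snoc, eq_sub_iff_add_eq]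
    constructor
    · rintro ⟨⟨hf, hh⟩, rfl⟩
      exact ⟨hh, hf, rfl⟩
    · rintro ⟨hh, hf, rfl⟩
      exact ⟨⟨hf, hh⟩, rfl⟩
  simp only [walkCount, card_filter]
  rw [← (Fin.snocEquiv fun _ => Bool).sum_comp, Fintype.sum_prod_type, Fintype.sum_bool]
  simp only [Fin.snocEquiv, Equiv.coe_fn_mk, hsnoc]
  split_ifs with hh <;> simp [hh, step, sub_neg_eq_add]

end Count

def freeWalkCount (L : ℕ) (h : ℤ) : ℕ := walkCount (fun _ => True) L h

lemma freeWalkCount_zero (h : ℤ) : freeWalkCount 0 h = if h = 0 then 1 else 0 :=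
  walkCount_zero _ h

lemma freeWalkCount_succ (L : ℕ) (h : ℤ) :
    freeWalkCount (L + 1) h = freeWalkCount L (h - 1) + freeWalkCount L (h + 1) := by
  simp [freeWalkCount, walkCount_succ]

theorem walkCount_reflection (t L : ℕ) (h : ℤ) (hh : -(t : ℤ) - 1 ≤ h) :
    (walkCount (-(t : ℤ) ≤ ·) L h : ℤ) =
      freeWalkCount L h - freeWalkCount L (-h - 2 * t - 2) := by
  induction L generalizing h with
  | zero =>
    simp only [walkCount_zero, freeWalkCount_zero]
    split_ifs <;> push_cast <;> omega
  | succ L ih =>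
    rw [walkCount_succ, freeWalkCount_succ, freeWalkCount_succ]
    split_ifs with hpos
    · push_cast
      rw [ih (h - 1) (by omega), ih (h + 1) (by omega),
        show -(h - 1) - 2 * (t : ℤ) - 2 = -h - 2 * t - 2 + 1 by ring,
        show -(h + 1) - 2 * (t : ℤ) - 2 = -h - 2 * t - 2 - 1 by ring]
      ring
    · rw [show -h - 2 * (t : ℤ) - 2 = h by omega]
      simp

lemma dyckBelowCount_eq_sub (t L : ℕ) :
    (dyckBelowCount t L : ℤ) = freeWalkCount L 0 - freeWalkCount L (-2 * t - 2) := by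
  rw [show -2 * (t : ℤ) - 2 = -0 - 2 * t - 2 by ring]
  exact walkCount_reflection t L 0 (by omega)

end LatticePath

open LatticePath

lemma PowerSeries.eq_zero_of_eq_X_mul_neighbors {R : Type*} [CommRing R] (D : ℤ → R⟦X⟧)
    (hD : ∀ m, D m = X * (D (m - 1) + 2 * D m + D (m + 1))) : D = 0 := by
  funext m
  ext n
  induction n generalizing m with
  | zero => rw [hD]; simp
  | succ n ih => rw [hD, coeff_succ_X_mul]; simp [two_mul, ih]

section Series

variable {R : Type*} [CommRing R]

variable (R) in
noncomputable def evenWalkSeries (m : ℤ) : R⟦X⟧ :=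
  mk fun n => (freeWalkCount (2 * n) (2 * m) : R)

lemma evenWalkSeries_eq (m : ℤ) :
    evenWalkSeries R m = (if m = 0 then 1 else 0) +
      X * (evenWalkSeries R (m - 1) + 2 * evenWalkSeries R m + evenWalkSeries R (m + 1)) := by
  ext n
  cases n with
  | zero => by_cases hm : m = 0 <;> simp [evenWalkSeries, freeWalkCount_zero, hm]
  | succ n =>
    have hcount : freeWalkCount (2 * (n + 1)) (2 * m) = freeWalkCount (2 * n) (2 * (m - 1)) +
        2 * freeWalkCount (2 * n) (2 * m) + freeWalkCount (2 * n) (2 * (m + 1)) := by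
      rw [show 2 * (n + 1) = 2 * n + 1 + 1 by ring, freeWalkCount_succ, freeWalkCount_succ,
        freeWalkCount_succ]
      ring_nf
    have hite : coeff (n + 1) (if m = 0 then (1 : R⟦X⟧) else 0) = 0 := by split_ifs <;> simp
    rw [map_add, coeff_succ_X_mul, hite, zero_add, two_mul]
    simp only [evenWalkSeries, map_add, coeff_mk, hcount]
    push_cast
    ring

lemma pow_natAbs_mul_one_add_eq {u : R⟦X⟧} (hu : u = X * (1 + u) ^ 2) (m : ℤ) :
    u ^ m.natAbs * (1 + u) = (1 - u) * (if m = 0 then 1 else 0) +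
      X * (u ^ (m - 1).natAbs * (1 + u) + 2 * (u ^ m.natAbs * (1 + u)) +
        u ^ (m + 1).natAbs * (1 + u)) := by
  by_cases hm : m = 0
  · subst hm
    simp only [if_true, Int.natAbs_zero, zero_sub, zero_add, Int.natAbs_neg, Int.natAbs_one]
    linear_combination 2 * hu
  · obtain ⟨a, ha, hneighbors⟩ : ∃ a : ℕ, m.natAbs = a + 1 ∧
        ((m - 1).natAbs = a ∧ (m + 1).natAbs = a + 2 ∨
          (m - 1).natAbs = a + 2 ∧ (m + 1).natAbs = a) :=
      ⟨m.natAbs - 1, by omega, by omega⟩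
    rw [if_neg hm, ha]
    rcases hneighbors with ⟨hl, hr⟩ | ⟨hl, hr⟩ <;> rw [hl, hr] <;>
      linear_combination u ^ a * (1 + u) * hu

theorem one_sub_mul_evenWalkSeries {u : R⟦X⟧} (hu : u = X * (1 + u) ^ 2) (m : ℤ) :
    (1 - u) * evenWalkSeries R m = u ^ m.natAbs * (1 + u) := by
  have hzero : (fun m => (1 - u) * evenWalkSeries R m - u ^ m.natAbs * (1 + u)) = 0 :=
    PowerSeries.eq_zero_of_eq_X_mul_neighbors _ fun m => by
      linear_combination (1 - u) * evenWalkSeries_eq (R := R) m - pow_natAbs_mul_one_add_eq hu m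
  exact sub_eq_zero.mp (congrFun hzero m)

end Series

theorem stmt_16_general (t : ℕ) (u : PowerSeries ℚ)
    (hu : u = X * (1 + u) ^ 2) :
    (1 - u) * PowerSeries.mk (fun n => (dyckBelowCount t (2 * n) : ℚ)) =
      (1 + u) * (1 - u ^ (t + 1)) := by
  have hseries : PowerSeries.mk (fun n => (dyckBelowCount t (2 * n) : ℚ)) =
      evenWalkSeries ℚ 0 - evenWalkSeries ℚ (-(t + 1)) := by
    ext n
    rw [map_sub, evenWalkSeries, evenWalkSeries, coeff_mk, coeff_mk, coeff_mk, mul_zero,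
      show (2 : ℤ) * -(t + 1) = -2 * t - 2 by ring]
    exact_mod_cast dyckBelowCount_eq_sub t (2 * n)
  rw [hseries, mul_sub, one_sub_mul_evenWalkSeries hu, one_sub_mul_evenWalkSeries hu,
    Int.natAbs_zero, Int.natAbs_neg, show ((t : ℤ) + 1).natAbs = t + 1 by omega]
  ring

/-- For `k = 1`, the generating function by half-length of `±1`-paths from 0 to 0
staying weakly above `-t` is `G(x) = (1+u)(1-u^(t+1))/(1-u)` under `x = u/(1+u)^2`,
i.e. `(1-u) · ∑_n count(2n) x^n = (1+u)(1-u^(t+1))`. -/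
theorem stmt_16 (t : ℕ) (u : PowerSeries ℚ)
    (hu0 : constantCoeff u = 0) (hu : u = X * (1 + u) ^ 2) :
    (1 - u) * PowerSeries.mk (fun n => (dyckBelowCount t (2 * n) : ℚ)) =
      (1 + u) * (1 - u ^ (t + 1)) :=
  stmt_16_general t u hu
end

section
/- Let p_t(u) = ((t+1)/2^t) * (1-u)/(1-u^(t+1)) * (1+u)^t with x = u/(1+u)^2. Then p_t(u(x)), as a power series in x, satisfies p_t(1) = 1 when evaluated at u = 1 (i.e., it is a probability generating function), and its coefficient of x^m equals ((t+1)/2^t) * sum over λ ≥ 0 of [binom(2m-1+t, m-λ(t+1)) - 2*binom(2m-1+t, m-1-λ(t+1)) + binom(2m-1+t, m-2-λ(t+1))]. -/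
/-!
Since `u` has no constant term, `(1 - u^(t+1))⁻¹` may be replaced by the finite geometric sum
`∑_{l ≤ m} u^(l(t+1))` when extracting `[x^m]`. Each resulting term `(1-u)(1+u)^t u^j` is
expanded by Lagrange inversion for `u = x (1+u)^2`,
`[x^m] (1+u)^n u^j = binom(2m+n-1, m-j) - binom(2m+n-1, m-j-1)`, which gives the three
binomials of the sum. At `v = 1` the singularity is removable:
`(1-v)/(1-v^(t+1)) = 1/(1 + v + ⋯ + v^t) → 1/(t+1)`, and `(t+1)/2^t · 1/(t+1) · 2^t = 1`.
-/

open PowerSeries Finset Filter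

/-- `N.choose (m - j)` read as a binomial coefficient with integer lower index `m - j`, which
vanishes when `m < j`. -/
def shiftedChoose {R : Type*} [Semiring R] (N m j : ℕ) : R :=
  if j ≤ m then (N.choose (m - j) : R) else 0

theorem shiftedChoose_succ_succ {R : Type*} [Semiring R] (N m j : ℕ) :
    (shiftedChoose (N + 1) (m + 1) j : R) = shiftedChoose N (m + 1) j + shiftedChoose N m j := by
  unfold shiftedChoose
  rcases lt_trichotomy j (m + 1) with h | rfl | h
  · rw [if_pos h.le, if_pos (by omega), if_pos (by omega), Nat.succ_sub (by omega),
      Nat.choose_succ_succ, Nat.cast_add, add_comm]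
  · simp
  · rw [if_neg (by omega), if_neg (by omega), if_neg (by omega), add_zero]

section LagrangeInversion

variable {R : Type*} [CommRing R] {u : R⟦X⟧}

/-- Lagrange inversion for `u = x (1+u)^2`, proved by induction on `m` through
`(1+u)^n u^(j+1) = x (1+u)^(n+2) u^j` and, for `j = 0`, induction on `n`. -/
theorem coeff_one_add_pow_mul_pow (hu : u = X * (1 + u) ^ 2) (m n j : ℕ) :
    coeff m ((1 + u) ^ n * u ^ j) =
      (shiftedChoose (2 * m + n - 1) m j - shiftedChoose (2 * m + n - 1) m (j + 1) : R) := by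
  have hu0 : constantCoeff u = 0 := by rw [hu, map_mul, constantCoeff_X, zero_mul]
  induction m using Nat.strong_induction_on generalizing n j with
  | _ m ih =>
  rcases m with _ | m
  · rcases j with _ | j <;> simp [shiftedChoose, hu0]
  have ih' := ih m m.lt_succ_self
  rcases j with _ | j
  · induction n with
    | zero =>
      have hsymm : (2 * m + 1).choose (m + 1) = (2 * m + 1).choose m := by
        rw [Nat.choose_symm_of_eq_add]; omega
      simp [shiftedChoose, show 2 * (m + 1) - 1 = 2 * m + 1 by omega, hsymm]
    | succ n ihn =>
      have hstep : (1 + u) ^ (n + 1) = (1 + u) ^ n + X * (1 + u) ^ (n + 2) := by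
        linear_combination (1 + u) ^ n * hu
      have hN : 2 * (m + 1) + (n + 1) - 1 = (2 * m + n + 1) + 1 := by omega
      rw [pow_zero, mul_one] at ihn ⊢
      have hcoeff := ih' (n + 2) 0
      rw [pow_zero, mul_one] at hcoeff
      rw [hstep, map_add, coeff_succ_X_mul, ihn, hcoeff, hN,
        show 2 * (m + 1) + n - 1 = 2 * m + n + 1 by omega,
        show 2 * m + (n + 2) - 1 = 2 * m + n + 1 by omega,
        shiftedChoose_succ_succ (2 * m + n + 1) m 0,
        shiftedChoose_succ_succ (2 * m + n + 1) m 1]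
      ring
  · have hshift : (1 + u) ^ n * u ^ (j + 1) = X * ((1 + u) ^ (n + 2) * u ^ j) := by
      linear_combination (1 + u) ^ n * u ^ j * hu
    rw [hshift, coeff_succ_X_mul, ih', show 2 * m + (n + 2) - 1 = 2 * (m + 1) + n - 1 by omega]
    simp only [shiftedChoose, Nat.add_le_add_iff_right, Nat.add_sub_add_right]

theorem coeff_one_sub_mul_one_add_pow_mul_pow (hu : u = X * (1 + u) ^ 2) (m n j : ℕ) :
    coeff m ((1 - u) * (1 + u) ^ n * u ^ j) =
      (shiftedChoose (2 * m + n - 1) m j - 2 * shiftedChoose (2 * m + n - 1) m (j + 1)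
        + shiftedChoose (2 * m + n - 1) m (j + 2) : R) := by
  rw [show (1 - u) * (1 + u) ^ n * u ^ j = (1 + u) ^ n * u ^ j - (1 + u) ^ n * u ^ (j + 1) by ring,
    map_sub, coeff_one_add_pow_mul_pow hu, coeff_one_add_pow_mul_pow hu]
  ring

end LagrangeInversion

theorem coeff_mul_inv_one_sub {k : Type*} [Field k] {w : k⟦X⟧} (hw : constantCoeff w = 0)
    (F : k⟦X⟧) (m : ℕ) :
    coeff m (F * (1 - w)⁻¹) = coeff m (F * ∑ l ∈ range (m + 1), w ^ l) := by
  have hunit : constantCoeff (1 - w) ≠ 0 := by simp [hw]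
  have hinv : (1 - w)⁻¹ = ∑ l ∈ range (m + 1), w ^ l + (1 - w)⁻¹ * w ^ (m + 1) := by
    rw [inv_eq_iff_mul_eq_one hunit]
    linear_combination w ^ (m + 1) * PowerSeries.mul_inv_cancel _ hunit +
      mul_neg_geom_sum w (m + 1)
  have htail : coeff m (F * ((1 - w)⁻¹ * w ^ (m + 1))) = 0 := by
    have hdvd : (X : k⟦X⟧) ^ (m + 1) ∣ F * ((1 - w)⁻¹ * w ^ (m + 1)) :=
      (pow_dvd_pow_of_dvd (X_dvd_iff.2 hw) _).mul_left _ |>.mul_left _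
    exact X_pow_dvd_iff.1 hdvd m m.lt_succ_self
  rw [hinv, mul_add, map_add, htail, add_zero]

theorem tendsto_one_sub_div_one_sub_pow (n : ℕ) :
    Tendsto (fun v : ℝ => (1 - v) / (1 - v ^ (n + 1))) (nhdsWithin 1 {1}ᶜ)
      (nhds ((n + 1 : ℝ)⁻¹)) := by
  have hcont : ContinuousAt (fun v : ℝ => (∑ i ∈ range (n + 1), v ^ i)⁻¹) 1 :=
    (continuous_finsetSum _ fun i _ => continuous_pow i).continuousAt.inv₀ (by simp; positivity)
  have hlim := hcont.tendsto.mono_left (nhdsWithin_le_nhds (s := {(1 : ℝ)}ᶜ))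
  simp only [one_pow, sum_const, card_range, nsmul_eq_mul, mul_one] at hlim
  push_cast at hlim
  refine hlim.congr' ?_
  filter_upwards [self_mem_nhdsWithin] with v hv
  have hv1 : (1 : ℝ) - v ≠ 0 := sub_ne_zero.mpr (Ne.symm hv)
  rw [← geom_sum_mul_neg, mul_comm, ← div_div, div_self hv1, one_div]

theorem stmt_17_general (t : ℕ) (u : PowerSeries ℝ)
    (hu : u = X * (1 + u) ^ 2) :
    Tendsto (fun v : ℝ =>
        (((t : ℝ) + 1) / 2 ^ t) * (1 - v) / (1 - v ^ (t + 1)) * (1 + v) ^ t)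
      (nhdsWithin 1 {(1 : ℝ)}ᶜ) (nhds 1) ∧
    ∀ m : ℕ,
      coeff m (PowerSeries.C (((t : ℝ) + 1) / 2 ^ t) * (1 - u) *
          (1 - u ^ (t + 1))⁻¹ * (1 + u) ^ t) =
        (((t : ℝ) + 1) / 2 ^ t) *
          ∑ l ∈ Finset.range (m + 1),
            ((if l * (t + 1) ≤ m then ((2 * m + t - 1).choose (m - l * (t + 1)) : ℝ) else 0)
              - 2 * (if l * (t + 1) + 1 ≤ m then
                  ((2 * m + t - 1).choose (m - 1 - l * (t + 1)) : ℝ) else 0)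
              + (if l * (t + 1) + 2 ≤ m then
                  ((2 * m + t - 1).choose (m - 2 - l * (t + 1)) : ℝ) else 0)) := by
  set c : ℝ := ((t : ℝ) + 1) / 2 ^ t
  refine ⟨?_, fun m => ?_⟩
  · have hlim := ((tendsto_const_nhds (x := c)).mul (tendsto_one_sub_div_one_sub_pow t)).mul
      ((((continuous_const_add (1 : ℝ)).pow t).tendsto 1).mono_left nhdsWithin_le_nhds)
    convert hlim using 2
    · rw [mul_div_assoc]; rfl
    · simp only [c]; field_simp; norm_num
  · have hw : constantCoeff (u ^ (t + 1)) = 0 := by rw [hu]; simp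
    rw [mul_right_comm _ (1 - u ^ (t + 1))⁻¹, coeff_mul_inv_one_sub hw, mul_assoc (C c),
      mul_assoc (C c), mul_sum, coeff_C_mul, map_sum]
    congr 1
    refine sum_congr rfl fun l _ => ?_
    rw [← pow_mul, mul_comm (t + 1), coeff_one_sub_mul_one_add_pow_mul_pow hu]
    simp only [shiftedChoose, Nat.sub_sub, add_comm 1, add_comm 2]

/-- With `u(0)=0` and `x = u/(1+u)^2`, the series
`p_t = ((t+1)/2^t)(1-u)(1-u^(t+1))⁻¹(1+u)^t` is a probability generating function
(its value at `u = 1` is 1), and its coefficient of `x^m` equals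
`((t+1)/2^t) ∑_{λ≥0} [binom(2m-1+t, m-λ(t+1)) - 2 binom(2m-1+t, m-1-λ(t+1))
 + binom(2m-1+t, m-2-λ(t+1))]`, binomials with negative lower index being 0. -/
theorem stmt_17 (t : ℕ) (u : PowerSeries ℝ)
    (hu0 : constantCoeff u = 0) (hu : u = X * (1 + u) ^ 2) :
    Tendsto (fun v : ℝ =>
        (((t : ℝ) + 1) / 2 ^ t) * (1 - v) / (1 - v ^ (t + 1)) * (1 + v) ^ t)
      (nhdsWithin 1 {(1 : ℝ)}ᶜ) (nhds 1) ∧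
    ∀ m : ℕ,
      coeff m (PowerSeries.C (((t : ℝ) + 1) / 2 ^ t) * (1 - u) *
          (1 - u ^ (t + 1))⁻¹ * (1 + u) ^ t) =
        (((t : ℝ) + 1) / 2 ^ t) *
          ∑ l ∈ Finset.range (m + 1),
            ((if l * (t + 1) ≤ m then ((2 * m + t - 1).choose (m - l * (t + 1)) : ℝ) else 0)
              - 2 * (if l * (t + 1) + 1 ≤ m then
                  ((2 * m + t - 1).choose (m - 1 - l * (t + 1)) : ℝ) else 0)
              + (if l * (t + 1) + 2 ≤ m then
                  ((2 * m + t - 1).choose (m - 2 - l * (t + 1)) : ℝ) else 0)) :=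
  stmt_17_general t u hu
end
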